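/- arXiv:1804.06071 — 7 statements merged into one kernel-verified Lean document; each statement's English description precedes it below -/
import Mathlib

section
/- The number of permutations of [n] avoiding both 132 and 312 is 2^{n-1}, for every n ≥ 1. -/
/-- An occurrence of the pattern `σ` in `π` is a strictly increasing choice of
indices whose images under `π` are order-isomorphic to `σ`. -/
def IsOccurrence {m n : ℕ} (σ : Equiv.Perm (Fin m)) (π : Equiv.Perm (Fin n))
    (f : Fin m → Fin n) : Prop :=
  StrictMono f ∧ ∀ j k : Fin m, π (f j) < π (f k) ↔ σ j < σ k

/-- `numOcc σ π` is the number of occurrences of the pattern `σ` in `π`. -/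
noncomputable def numOcc {m n : ℕ} (σ : Equiv.Perm (Fin m)) (π : Equiv.Perm (Fin n)) : ℕ :=
  Nat.card {f : Fin m → Fin n // IsOccurrence σ π f}

def p123 : Equiv.Perm (Fin 3) := 1
def p132 : Equiv.Perm (Fin 3) := Equiv.swap 1 2
def p213 : Equiv.Perm (Fin 3) := Equiv.swap 0 1
def p321 : Equiv.Perm (Fin 3) := Equiv.swap 0 2
def p231 : Equiv.Perm (Fin 3) := finRotate 3
def p312 : Equiv.Perm (Fin 3) := (finRotate 3)⁻¹

/-!
Avoiding both 132 and 312 means that every entry of `π` is larger than all entries before it or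
smaller than all of them. So the last entry is either the largest or the smallest value, and
deleting it leaves (after shifting values down) a permutation of the same kind; conversely both
choices of the last value extend any such permutation. Hence the count doubles from `n = 1` on.
-/

open Equiv

lemma numOcc_eq_zero_iff {m n : ℕ} (σ : Perm (Fin m)) (π : Perm (Fin n)) :
    numOcc σ π = 0 ↔ ∀ f, ¬ IsOccurrence σ π f := by
  rw [numOcc, Finite.card_eq_zero_iff, isEmpty_subtype]

lemma isOccurrence_iff_strictMono {m n : ℕ} (σ : Perm (Fin m)) (π : Perm (Fin n))
    (f : Fin m → Fin n) :
    IsOccurrence σ π f ↔ StrictMono f ∧ StrictMono (π ∘ f ∘ σ.symm) := by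
  refine and_congr_right fun _ => ⟨fun h a b hab => ?_, fun h j k => ?_⟩
  · simpa [h] using hab
  · simpa using h.lt_iff_lt (a := σ j) (b := σ k)

lemma strictMono_fin_three_iff {α : Type*} [Preorder α] (g : Fin 3 → α) :
    StrictMono g ↔ g 0 < g 1 ∧ g 1 < g 2 := by
  simp [Fin.strictMono_iff_lt_succ, Fin.forall_fin_succ]

lemma exists_isOccurrence_p132_iff {n : ℕ} (π : Perm (Fin n)) :
    (∃ f, IsOccurrence p132 π f) ↔
      ∃ a b c, a < b ∧ b < c ∧ π a < π c ∧ π c < π b := by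
  have h : ⇑p132.symm = ![0, 2, 1] := by decide
  simp only [isOccurrence_iff_strictMono, strictMono_fin_three_iff, h]
  constructor
  · rintro ⟨f, ⟨h01, h12⟩, h1, h2⟩
    exact ⟨f 0, f 1, f 2, h01, h12, h1, h2⟩
  · rintro ⟨a, b, c, hab, hbc, h1, h2⟩
    exact ⟨![a, b, c], ⟨hab, hbc⟩, h1, h2⟩

lemma exists_isOccurrence_p312_iff {n : ℕ} (π : Perm (Fin n)) :
    (∃ f, IsOccurrence p312 π f) ↔
      ∃ a b c, a < b ∧ b < c ∧ π b < π c ∧ π c < π a := by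
  have h : ⇑p312.symm = ![1, 2, 0] := by decide
  simp only [isOccurrence_iff_strictMono, strictMono_fin_three_iff, h]
  constructor
  · rintro ⟨f, ⟨h01, h12⟩, h1, h2⟩
    exact ⟨f 0, f 1, f 2, h01, h12, h1, h2⟩
  · rintro ⟨a, b, c, hab, hbc, h1, h2⟩
    exact ⟨![a, b, c], ⟨hab, hbc⟩, h1, h2⟩

def AllRecords {α : Type*} [Preorder α] {n : ℕ} (f : Fin n → α) : Prop :=
  ∀ k, (∀ j < k, f j < f k) ∨ (∀ j < k, f k < f j)

lemma avoids_132_312_iff_allRecords {n : ℕ} (π : Perm (Fin n)) :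
    (numOcc p132 π = 0 ∧ numOcc p312 π = 0) ↔ AllRecords π := by
  simp only [numOcc_eq_zero_iff, ← not_exists, exists_isOccurrence_p132_iff,
    exists_isOccurrence_p312_iff]
  constructor
  · rintro ⟨h132, h312⟩ k
    by_contra! ⟨⟨a, hak, hka⟩, ⟨b, hbk, hkb⟩⟩
    replace hka := hka.lt_of_ne (π.injective.ne hak.ne')
    replace hkb := hkb.lt_of_ne (π.injective.ne hbk.ne)
    rcases lt_trichotomy a b with hab | rfl | hba
    · exact h312 ⟨a, b, k, hab, hbk, hkb, hka⟩
    · exact hka.not_gt hkb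
    · exact h132 ⟨b, a, k, hba, hak, hkb, hka⟩
  · intro h
    constructor
    · rintro ⟨a, b, c, hab, hbc, hac, hcb⟩
      rcases h c with hc | hc
      · exact (hc b hbc).not_gt hcb
      · exact (hc a (hab.trans hbc)).not_gt hac
    · rintro ⟨a, b, c, hab, hbc, hbc', hca⟩
      rcases h c with hc | hc
      · exact (hc a (hab.trans hbc)).not_gt hca
      · exact (hc b hbc).not_gt hbc'

lemma StrictMono.allRecords_comp_iff {α β : Type*} [LinearOrder α] [Preorder β] {n : ℕ}
    {e : α → β} (he : StrictMono e) {f : Fin n → α} :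
    AllRecords (e ∘ f) ↔ AllRecords f := by
  simp only [AllRecords, Function.comp_apply, he.lt_iff_lt]

lemma allRecords_succ_iff {α : Type*} [Preorder α] {n : ℕ} (f : Fin (n + 1) → α) :
    AllRecords f ↔ AllRecords (f ∘ Fin.castSucc) ∧
      ((∀ i : Fin n, f i.castSucc < f (Fin.last n)) ∨
        ∀ i : Fin n, f (Fin.last n) < f i.castSucc) := by
  have last_not_lt (i : Fin n) : ¬ Fin.last n < i.castSucc := (Fin.le_last _).not_gt
  simp [AllRecords, Fin.forall_fin_succ', Fin.castSucc_lt_last, last_not_lt]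

def permSnoc {n : ℕ} (q : Fin (n + 1)) (π : Perm (Fin n)) : Perm (Fin (n + 1)) :=
  finSuccEquivLast.trans (π.optionCongr.trans (finSuccEquiv' q).symm)

@[simp]
lemma permSnoc_last {n : ℕ} (q : Fin (n + 1)) (π : Perm (Fin n)) :
    permSnoc q π (Fin.last n) = q := by
  simp [permSnoc, finSuccEquivLast_last]

@[simp]
lemma permSnoc_castSucc {n : ℕ} (q : Fin (n + 1)) (π : Perm (Fin n)) (i : Fin n) :
    permSnoc q π i.castSucc = q.succAbove (π i) := by
  simp [permSnoc, finSuccEquivLast_castSucc]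

def permInit {n : ℕ} (σ : Perm (Fin (n + 1))) : Perm (Fin n) :=
  (finSuccAboveEquiv (Fin.last n)).trans
    ((σ.subtypeEquiv (p := (· ≠ Fin.last n)) fun _ => σ.injective.ne_iff.symm).trans
      (finSuccAboveEquiv (σ (Fin.last n))).symm)

lemma succAbove_permInit {n : ℕ} (σ : Perm (Fin (n + 1))) (i : Fin n) :
    (σ (Fin.last n)).succAbove (permInit σ i) = σ i.castSucc := by
  simp only [permInit, Equiv.trans_apply, Equiv.subtypeEquiv_apply, finSuccAboveEquiv_apply,
    Fin.succAbove_last]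
  exact congrArg Subtype.val ((finSuccAboveEquiv _).apply_symm_apply _)

def permSnocEquiv (n : ℕ) : Fin (n + 1) × Perm (Fin n) ≃ Perm (Fin (n + 1)) where
  toFun p := permSnoc p.1 p.2
  invFun σ := (σ (Fin.last n), permInit σ)
  left_inv := fun ⟨q, π⟩ => by
    have h := succAbove_permInit (permSnoc q π)
    simp only [permSnoc_last, permSnoc_castSucc] at h
    exact Prod.ext (permSnoc_last q π) (Equiv.ext fun i => Fin.succAbove_right_injective (h i))
  right_inv σ := by
    ext i
    induction i using Fin.lastCases with
    | last => simp
    | cast i => simp [succAbove_permInit]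

lemma Fin.forall_succAbove_lt_iff {n : ℕ} (q : Fin (n + 1)) :
    (∀ i : Fin n, q.succAbove i < q) ↔ q = Fin.last n := by
  simp only [Fin.succAbove_lt_iff_castSucc_lt]
  refine ⟨fun h => ?_, fun hq i => hq ▸ Fin.castSucc_lt_last i⟩
  by_contra hq
  exact (h (q.castPred hq)).ne (Fin.castSucc_castPred q hq)

lemma Fin.forall_lt_succAbove_iff {n : ℕ} (q : Fin (n + 1)) :
    (∀ i : Fin n, q < q.succAbove i) ↔ q = 0 := by
  refine ⟨fun h => ?_, fun hq i => by simp [hq, Fin.succ_pos]⟩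
  by_contra hq
  exact ((Fin.lt_succAbove_iff_le_castSucc _ _).1 (h (q.pred hq))).not_gt (Fin.castSucc_pred_lt hq)

lemma allRecords_permSnoc_iff {n : ℕ} (q : Fin (n + 1)) (π : Perm (Fin n)) :
    AllRecords (permSnoc q π) ↔ (q = Fin.last n ∨ q = 0) ∧ AllRecords π := by
  have hinit : ⇑(permSnoc q π) ∘ Fin.castSucc = q.succAbove ∘ π :=
    funext (permSnoc_castSucc q π)
  rw [allRecords_succ_iff, hinit, (Fin.strictMono_succAbove q).allRecords_comp_iff, and_comm]
  simp only [permSnoc_castSucc, permSnoc_last,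
    π.forall_congr_right (q := fun j => q.succAbove j < q),
    π.forall_congr_right (q := fun j => q < q.succAbove j),
    Fin.forall_succAbove_lt_iff, Fin.forall_lt_succAbove_iff]

lemma card_allRecords_succ (n : ℕ) :
    Nat.card {σ : Perm (Fin (n + 1)) // AllRecords σ} =
      Nat.card {q : Fin (n + 1) // q = Fin.last n ∨ q = 0} *
        Nat.card {π : Perm (Fin n) // AllRecords π} := by
  rw [← Nat.card_prod]
  refine Nat.card_congr (.symm ?_)
  calc
    _ ≃ {p : Fin (n + 1) × Perm (Fin n) // (p.1 = Fin.last n ∨ p.1 = 0) ∧ AllRecords p.2} :=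
      Equiv.subtypeProdEquivProd.symm
    _ ≃ {p : Fin (n + 1) × Perm (Fin n) // AllRecords (permSnoc p.1 p.2)} :=
      Equiv.subtypeEquivRight fun p => (allRecords_permSnoc_iff p.1 p.2).symm
    _ ≃ {σ : Perm (Fin (n + 1)) // AllRecords σ} :=
      (permSnocEquiv n).subtypeEquiv fun _ => Iff.rfl

lemma card_eq_last_or_eq_zero (n : ℕ) :
    Nat.card {q : Fin (n + 2) // q = Fin.last (n + 1) ∨ q = 0} = 2 := by
  simp [Nat.card_eq_fintype_card, Fintype.card_subtype, Finset.filter_or, Finset.filter_eq']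

lemma card_allRecords (n : ℕ) :
    Nat.card {σ : Perm (Fin n) // AllRecords σ} = 2 ^ (n - 1) := by
  induction n with
  | zero =>
    have hall (σ : Perm (Fin 0)) : AllRecords σ := fun k => k.elim0
    rw [Nat.card_congr (Equiv.subtypeUnivEquiv hall)]
    simp
  | succ n ih =>
    rw [card_allRecords_succ, ih]
    rcases n with _ | n
    · simp
    · rw [card_eq_last_or_eq_zero, Nat.add_sub_cancel, Nat.add_sub_cancel, pow_succ']

theorem card_avoid_132_312_general (n : ℕ) :
    Nat.card {π : Equiv.Perm (Fin n) // numOcc p132 π = 0 ∧ numOcc p312 π = 0} =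
      2 ^ (n - 1) := by
  rw [Nat.card_congr (Equiv.subtypeEquivRight avoids_132_312_iff_allRecords)]
  exact card_allRecords n

theorem card_avoid_132_312 (n : ℕ) (hn : 1 ≤ n) :
    Nat.card {π : Equiv.Perm (Fin n) // numOcc p132 π = 0 ∧ numOcc p312 π = 0} =
      2 ^ (n - 1) :=
  card_avoid_132_312_general n
end

section
/- A permutation π avoids both 231 and 312 if and only if every block in its decomposition into indecomposable permutations is a decreasing permutation, i.e., of the form ℓ(ℓ−1)⋯21 for some ℓ ≥ 1. -/
/-- The composition (direct sum) `σ * τ` of two permutations. -/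
def permComp {m n : ℕ} (σ : Equiv.Perm (Fin m)) (τ : Equiv.Perm (Fin n)) :
    Equiv.Perm (Fin (m + n)) :=
  Equiv.permCongr finSumFinEquiv (Equiv.sumCongr σ τ)

/-- Permutations of arbitrary (finite) length. -/
def SPerm := Σ n : ℕ, Equiv.Perm (Fin n)

def SPerm.comp (p q : SPerm) : SPerm := ⟨p.1 + q.1, permComp p.2 q.2⟩

/-!
Both sides are equivalent to `HasUnitDescents π`: whenever `π i > π (i + 1)`, the drop is
exactly one. If instead `π i > v > π (i + 1)`, then `v` sits before `i` or after `i + 1`, giving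
a `231` or a `312`. Conversely, with unit descents every value between `π i` and a smaller
later value `π j` is taken between positions `i` and `j`, so an occurrence of `231` or `312`
would force some value to be taken twice. Unit descents also force `π` to begin with
`π 0, π 0 - 1, …, 0`, a decreasing block of length `π 0 + 1` followed by a permutation that again
has unit descents; and a sum of decreasing blocks clearly has unit descents.
-/

open Equiv

/-- `π` read as a function `ℕ → ℕ` (junk value `0` from `n` on), so that index arithmetic can be
left to `omega`. -/
def natApply {n : ℕ} (π : Perm (Fin n)) (i : ℕ) : ℕ :=
  if h : i < n then π ⟨i, h⟩ else 0

lemma natApply_of_lt {n : ℕ} (π : Perm (Fin n)) {i : ℕ} (h : i < n) :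
    natApply π i = π ⟨i, h⟩ := dif_pos h

lemma natApply_val {n : ℕ} (π : Perm (Fin n)) (x : Fin n) : natApply π x = π x :=
  natApply_of_lt π x.isLt

lemma natApply_lt {n : ℕ} (π : Perm (Fin n)) {i : ℕ} (h : i < n) : natApply π i < n := by
  rw [natApply_of_lt π h]; exact (π _).isLt

lemma natApply_injOn {n : ℕ} (π : Perm (Fin n)) : Set.InjOn (natApply π) (Set.Iio n) := by
  intro i hi j hj h
  rw [natApply_of_lt π hi, natApply_of_lt π hj] at h
  exact congrArg Fin.val (π.injective (Fin.ext h))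

lemma exists_natApply_eq {n : ℕ} (π : Perm (Fin n)) {v : ℕ} (hv : v < n) :
    ∃ i < n, natApply π i = v :=
  ⟨π.symm ⟨v, hv⟩, (π.symm _).isLt, by rw [natApply_val, Equiv.apply_symm_apply]⟩

lemma permComp_castAdd {m k : ℕ} (σ : Perm (Fin m)) (τ : Perm (Fin k)) (i : Fin m) :
    permComp σ τ (Fin.castAdd k i) = Fin.castAdd k (σ i) := by
  simp [permComp, Equiv.permCongr_apply]

lemma permComp_natAdd {m k : ℕ} (σ : Perm (Fin m)) (τ : Perm (Fin k)) (j : Fin k) :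
    permComp σ τ (Fin.natAdd m j) = Fin.natAdd m (τ j) := by
  simp [permComp, Equiv.permCongr_apply]

lemma natApply_permComp_of_lt {m k : ℕ} (σ : Perm (Fin m)) (τ : Perm (Fin k)) {i : ℕ}
    (hi : i < m) : natApply (permComp σ τ) i = natApply σ i := by
  rw [natApply_of_lt _ (by omega), natApply_of_lt σ hi]
  exact congrArg Fin.val (permComp_castAdd σ τ ⟨i, hi⟩)

lemma natApply_permComp_add {m k : ℕ} (σ : Perm (Fin m)) (τ : Perm (Fin k)) {j : ℕ}
    (hj : j < k) : natApply (permComp σ τ) (m + j) = m + natApply τ j := by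
  rw [natApply_of_lt _ (by omega), natApply_of_lt τ hj]
  exact congrArg Fin.val (permComp_natAdd σ τ ⟨j, hj⟩)

def HasUnitDescents {n : ℕ} (π : Perm (Fin n)) : Prop :=
  ∀ i, i + 1 < n → natApply π i ≤ natApply π (i + 1) + 1

namespace HasUnitDescents

variable {n : ℕ} {π : Perm (Fin n)}

lemma intermediate_value (hπ : HasUnitDescents π) {i j v : ℕ} (hij : i ≤ j) (hj : j < n)
    (hiv : v ≤ natApply π i) (hjv : natApply π j ≤ v) :
    ∃ m, i ≤ m ∧ m ≤ j ∧ natApply π m = v := by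
  induction j, hij using Nat.le_induction with
  | base => exact ⟨i, le_rfl, le_rfl, by omega⟩
  | succ j hij ih =>
    by_cases hjv' : natApply π j ≤ v
    · obtain ⟨m, him, hmj, hm⟩ := ih (by omega) hjv'
      exact ⟨m, him, by omega, hm⟩
    · exact ⟨j + 1, by omega, le_rfl, by have := hπ j hj; omega⟩

lemma natApply_succ_add_one_of_lt (hπ : HasUnitDescents π) {i j : ℕ} (hij : i < j) (hj : j < n)
    (hji : natApply π j < natApply π i) : natApply π (i + 1) + 1 = natApply π i := by
  have hstep := hπ i (by omega)
  by_contra hne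
  obtain ⟨m, him, hmj, hm⟩ :=
    hπ.intermediate_value (i := i + 1) (by omega) hj (by omega) hji.le
  have := natApply_injOn π (show m < n by omega) (show i < n by omega) hm
  omega

lemma natApply_eq_natApply_zero_sub (hπ : HasUnitDescents π) :
    ∀ i ≤ natApply π 0, natApply π i = natApply π 0 - i := by
  intro i
  induction i using Nat.strong_induction_on with
  | _ i ih =>
    intro hi
    rcases i with _ | i
    · rfl
    have hn : 0 < n := by
      by_contra h
      simp [natApply, show n = 0 by omega] at hi
    obtain ⟨z, hz, hz0⟩ := exists_natApply_eq π hn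
    have hiz : i < z := by
      by_contra h
      have := ih z (by omega) (by omega)
      omega
    have := hπ.natApply_succ_add_one_of_lt hiz hz (by rw [hz0, ih i (by omega) (by omega)]; omega)
    have := ih i (by omega) (by omega)
    omega

lemma of_permComp {m k : ℕ} {σ : Perm (Fin m)} {τ : Perm (Fin k)}
    (h : HasUnitDescents (permComp σ τ)) : HasUnitDescents τ := by
  intro j hj
  have := h (m + j) (by omega)
  rw [natApply_permComp_add σ τ (by omega), add_assoc, natApply_permComp_add σ τ hj] at this
  omega

lemma permComp {m k : ℕ} {σ : Perm (Fin m)} {τ : Perm (Fin k)} (hσ : HasUnitDescents σ)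
    (hτ : HasUnitDescents τ) : HasUnitDescents (permComp σ τ) := by
  intro i hi
  rcases lt_trichotomy (i + 1) m with h | h | h
  · rw [natApply_permComp_of_lt σ τ h, natApply_permComp_of_lt σ τ (by omega)]
    exact hσ i h
  · have := natApply_lt σ (show i < m by omega)
    rw [natApply_permComp_of_lt σ τ (by omega), show i + 1 = m + 0 by omega,
      natApply_permComp_add σ τ (by omega)]
    omega
  · obtain ⟨j, rfl⟩ : ∃ j, i = m + j := ⟨i - m, by omega⟩
    rw [show m + j + 1 = m + (j + 1) by omega, natApply_permComp_add σ τ (by omega),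
      natApply_permComp_add σ τ (by omega)]
    have := hτ j (by omega)
    omega

end HasUnitDescents

lemma hasUnitDescents_revPerm (m : ℕ) : HasUnitDescents (Fin.revPerm : Perm (Fin m)) := by
  intro i hi
  rw [natApply_of_lt _ hi, natApply_of_lt _ (by omega)]
  simp only [Fin.revPerm_apply, Fin.val_rev]
  omega

section Patterns

variable {n : ℕ} {π : Perm (Fin n)}

lemma strictMono_vecCons₃ {a b c : Fin n} (hab : a < b) (hbc : b < c) :
    StrictMono ![a, b, c] := by
  intro x y hxy
  fin_cases x <;> fin_cases y <;> simp_all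
  exact hab.trans hbc

lemma isOccurrence_p231 {a b c : Fin n} (hab : a < b) (hbc : b < c) (hca : π c < π a)
    (hab' : π a < π b) : IsOccurrence p231 π ![a, b, c] := by
  refine ⟨strictMono_vecCons₃ hab hbc, fun j k => ?_⟩
  have hcb := hca.trans hab'
  have h0 : p231 0 = 1 := by decide
  have h1 : p231 1 = 2 := by decide
  have h2 : p231 2 = 0 := by decide
  fin_cases j <;> fin_cases k <;>
    simp [h0, h1, h2, hca, hab', hcb, hca.not_gt, hab'.not_gt, hcb.not_gt]

lemma isOccurrence_p312 {a b c : Fin n} (hab : a < b) (hbc : b < c) (hbc' : π b < π c)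
    (hca : π c < π a) : IsOccurrence p312 π ![a, b, c] := by
  refine ⟨strictMono_vecCons₃ hab hbc, fun j k => ?_⟩
  have hba := hbc'.trans hca
  have h0 : p312 0 = 2 := by decide
  have h1 : p312 1 = 0 := by decide
  have h2 : p312 2 = 1 := by decide
  fin_cases j <;> fin_cases k <;>
    simp [h0, h1, h2, hbc', hca, hba, hbc'.not_gt, hca.not_gt, hba.not_gt]

lemma HasUnitDescents.numOcc_p231_eq_zero (hπ : HasUnitDescents π) : numOcc p231 π = 0 := by
  rw [numOcc_eq_zero_iff]
  rintro f ⟨hf, hpat⟩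
  have h01 : f 0 < f 1 := hf (by decide)
  have h12 : f 1 < f 2 := hf (by decide)
  have hv01 : π (f 0) < π (f 1) := (hpat 0 1).mpr (by decide)
  have hv20 : π (f 2) < π (f 0) := (hpat 2 0).mpr (by decide)
  simp only [Fin.lt_def, ← natApply_val] at h01 h12 hv01 hv20
  obtain ⟨m, h1m, hm2, hm⟩ := hπ.intermediate_value h12.le (f 2).isLt hv01.le hv20.le
  have := natApply_injOn π (show m < n by omega) (f 0).isLt hm
  omega

lemma HasUnitDescents.numOcc_p312_eq_zero (hπ : HasUnitDescents π) : numOcc p312 π = 0 := by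
  rw [numOcc_eq_zero_iff]
  rintro f ⟨hf, hpat⟩
  have h01 : f 0 < f 1 := hf (by decide)
  have h12 : f 1 < f 2 := hf (by decide)
  have hv12 : π (f 1) < π (f 2) := (hpat 1 2).mpr (by decide)
  have hv20 : π (f 2) < π (f 0) := (hpat 2 0).mpr (by decide)
  simp only [Fin.lt_def, ← natApply_val] at h01 h12 hv12 hv20
  obtain ⟨m, h0m, hm1, hm⟩ := hπ.intermediate_value h01.le (f 1).isLt hv20.le hv12.le
  have := natApply_injOn π (show m < n by omega) (f 2).isLt hm
  omega

lemma hasUnitDescents_of_numOcc_eq_zero (h231 : numOcc p231 π = 0) (h312 : numOcc p312 π = 0) :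
    HasUnitDescents π := by
  intro i hi
  by_contra! hdesc
  obtain ⟨m, hm, hmv⟩ := exists_natApply_eq π
    ((hdesc.trans (natApply_lt π (show i < n by omega))) : natApply π (i + 1) + 1 < n)
  have hb : π ⟨i + 1, hi⟩ < π ⟨m, hm⟩ := by
    rw [Fin.lt_def, ← natApply_of_lt, ← natApply_of_lt]; omega
  have ha : π ⟨m, hm⟩ < π ⟨i, by omega⟩ := by
    rw [Fin.lt_def, ← natApply_of_lt, ← natApply_of_lt]; omega
  rcases lt_trichotomy m i with hmi | rfl | hmi
  · exact (numOcc_eq_zero_iff _ _).mp h231 _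
      (isOccurrence_p231 (Fin.mk_lt_mk.mpr hmi) (Fin.mk_lt_mk.mpr (by omega)) hb ha)
  · omega
  · have hmi' : i + 1 < m := by
      refine lt_of_le_of_ne hmi fun h => ?_
      subst h; omega
    exact (numOcc_eq_zero_iff _ _).mp h312 _
      (isOccurrence_p312 (Fin.mk_lt_mk.mpr (by omega)) (Fin.mk_lt_mk.mpr hmi') hb ha)

end Patterns

lemma exists_permComp_eq {m k : ℕ} (π : Perm (Fin (m + k)))
    (hπ : ∀ i : Fin m, (π (Fin.castAdd k i) : ℕ) < m) :
    ∃ (σ : Perm (Fin m)) (τ : Perm (Fin k)), permComp σ τ = π := by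
  let f : Fin m → Fin m := fun i => ⟨π (Fin.castAdd k i), hπ i⟩
  have hf : f.Injective := fun i j h =>
    Fin.castAdd_injective m k (π.injective (Fin.ext (Fin.mk.inj_iff.mp h)))
  have hge : ∀ j : Fin k, m ≤ (π (Fin.natAdd m j) : ℕ) := by
    intro j
    by_contra! hlt
    obtain ⟨i, hi⟩ := Finite.injective_iff_surjective.mp hf ⟨_, hlt⟩
    have := congrArg Fin.val (π.injective (Fin.ext (Fin.mk.inj_iff.mp hi)))
    simp only [Fin.val_castAdd, Fin.val_natAdd] at this
    omega
  let g : Fin k → Fin k := fun j =>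
    ⟨π (Fin.natAdd m j) - m, by have := hge j; have := (π (Fin.natAdd m j)).isLt; omega⟩
  have hg : g.Injective := by
    intro i j h
    have := congrArg Fin.val h
    simp only [g] at this
    have := hge i; have := hge j
    exact Fin.natAdd_injective k m (π.injective (Fin.ext (by omega)))
  refine ⟨.ofBijective f (Finite.injective_iff_bijective.mp hf),
    .ofBijective g (Finite.injective_iff_bijective.mp hg), Equiv.ext fun x => ?_⟩
  induction x using Fin.addCases with
  | left i => exact permComp_castAdd _ _ i
  | right j =>
    rw [permComp_natAdd]
    ext
    simp only [Fin.val_natAdd, Equiv.ofBijective_apply, g]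
    have := hge j
    omega

lemma exists_blocks_of_hasUnitDescents {n : ℕ} (π : Perm (Fin n)) (hπ : HasUnitDescents π) :
    ∃ L : List SPerm, (∀ q ∈ L, 1 ≤ q.1 ∧ q.2 = (Fin.revPerm : Perm (Fin q.1))) ∧
      L.foldr SPerm.comp ⟨0, 1⟩ = ⟨n, π⟩ := by
  induction n using Nat.strong_induction_on with
  | _ n ih =>
  rcases n.eq_zero_or_pos with rfl | hn
  · exact ⟨[], by simp, congrArg (Sigma.mk 0) (Subsingleton.elim _ _)⟩
  obtain ⟨ℓ, hℓ⟩ : ∃ ℓ, natApply π 0 + 1 = ℓ := ⟨_, rfl⟩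
  have hhead : ∀ i < ℓ, natApply π i = ℓ - 1 - i := fun i hi =>
    (hπ.natApply_eq_natApply_zero_sub i (by omega)).trans (by omega)
  obtain ⟨k, rfl⟩ : ∃ k, n = ℓ + k := ⟨n - ℓ, by have := natApply_lt π hn; omega⟩
  obtain ⟨σ, τ, rfl⟩ := exists_permComp_eq π fun i => by
    rw [← natApply_val, Fin.val_castAdd, hhead i i.isLt]; omega
  have hσ : σ = Fin.revPerm := Equiv.ext fun i => Fin.ext <| by
    rw [← natApply_val, ← natApply_permComp_of_lt σ τ i.isLt, hhead i i.isLt]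
    simp only [Fin.revPerm_apply, Fin.val_rev]
    omega
  obtain ⟨L, hL, hfold⟩ := ih k (by omega) τ hπ.of_permComp
  refine ⟨⟨ℓ, σ⟩ :: L, ?_, congrArg (SPerm.comp ⟨ℓ, σ⟩) hfold⟩
  rintro q (_ | ⟨_, hq⟩)
  · exact ⟨show 1 ≤ ℓ by omega, hσ⟩
  · exact hL q hq

lemma hasUnitDescents_foldr_comp (L : List SPerm)
    (hL : ∀ q ∈ L, q.2 = (Fin.revPerm : Perm (Fin q.1))) :
    HasUnitDescents (L.foldr SPerm.comp ⟨0, 1⟩).2 := by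
  induction L with
  | nil => intro i hi; exact absurd hi (Nat.not_lt_zero _)
  | cons q L ih =>
    refine HasUnitDescents.permComp ?_ (ih fun q hq => hL q (List.mem_cons_of_mem _ hq))
    rw [hL q List.mem_cons_self]
    exact hasUnitDescents_revPerm q.1

theorem avoids_231_312_iff_blocks_decreasing {n : ℕ} (π : Equiv.Perm (Fin n)) :
    (numOcc p231 π = 0 ∧ numOcc p312 π = 0) ↔
      ∃ L : List SPerm, (∀ q ∈ L, 1 ≤ q.1 ∧ q.2 = (Fin.revPerm : Equiv.Perm (Fin q.1))) ∧
        L.foldr SPerm.comp ⟨0, 1⟩ = ⟨n, π⟩ := by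
  constructor
  · rintro ⟨h231, h312⟩
    exact exists_blocks_of_hasUnitDescents π (hasUnitDescents_of_numOcc_eq_zero h231 h312)
  · rintro ⟨L, hL, hfold⟩
    have hπ := hasUnitDescents_foldr_comp L fun q hq => (hL q hq).2
    rw [hfold] at hπ
    exact ⟨hπ.numOcc_p231_eq_zero, hπ.numOcc_p312_eq_zero⟩
end

section
/- The set of permutations of [n] avoiding 132 and 321 consists exactly of the permutations π_{k,ℓ,n−k−ℓ} for integers k, ℓ ≥ 1 with k+ℓ ≤ n, together with the identity permutation; consequently |S_n(132,321)| = binomial(n,2) + 1. -/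
/-- The permutation `(ℓ+1, …, ℓ+k, 1, …, ℓ)` of `[k+ℓ]`. -/
def rotBlock (k ℓ : ℕ) : Equiv.Perm (Fin (k + ℓ)) :=
  finSumFinEquiv.symm.trans ((Equiv.sumComm (Fin k) (Fin ℓ)).trans
    (finSumFinEquiv.trans (finCongr (Nat.add_comm ℓ k))))

/-- The permutation `(ℓ+1, …, ℓ+k, 1, …, ℓ, k+ℓ+1, …, k+ℓ+m)` of `[k+ℓ+m]`. -/
def piKLM (k ℓ m : ℕ) : Equiv.Perm (Fin (k + ℓ + m)) :=
  permComp (rotBlock k ℓ) (1 : Equiv.Perm (Fin m))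

/-!
Counting positions and values from 0, let `k = π⁻¹ 0` and `ℓ = π 0`. Avoiding 321 makes `π`
increasing before position `k` and avoiding 132 makes it increasing from `k` on. Both patterns
are involutions, so `π⁻¹` avoids them too, with the roles of `k` and `ℓ` exchanged. A strictly
increasing run gains at least one per step, so comparing the run of `π` from `k` with the run of
`π⁻¹` up to `ℓ` forces `π (k + t) = t` for `t < ℓ`, dually `π t = ℓ + t` for `t < k`, and then
`π j = j` beyond `k + ℓ`. Thus `π = π_{k,ℓ,n-k-ℓ}`, or `π = id` when `k = 0`; the non-identity
ones correspond to the pairs `k - 1 < k + ℓ - 1` in `Fin n`.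
-/

open Equiv

section Patterns

variable {n : ℕ} (π : Perm (Fin n))

def Avoids132 : Prop := ∀ a b c : Fin n, a < b → b < c → ¬(π a < π c ∧ π c < π b)

def Avoids321 : Prop := ∀ a b c : Fin n, a < b → b < c → ¬(π c < π b ∧ π b < π a)

lemma strictMono_vecCons_three {α : Type*} [Preorder α] {a b c : α} (hab : a < b) (hbc : b < c) :
    StrictMono ![a, b, c] := by
  simp [Fin.strictMono_iff_lt_succ, Fin.forall_fin_two, hab, hbc]

lemma numOcc_eq_zero_iff_of_fin_three (σ : Perm (Fin 3)) :
    numOcc σ π = 0 ↔ ∀ a b c : Fin n, a < b → b < c →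
      ¬ ∀ i j : Fin 3, ![π a, π b, π c] i < ![π a, π b, π c] j ↔ σ i < σ j := by
  rw [numOcc, Finite.card_eq_zero_iff, isEmpty_subtype]
  constructor
  · intro h a b c hab hbc hσ
    refine h ![a, b, c] ⟨strictMono_vecCons_three hab hbc, fun i j => ?_⟩
    convert hσ i j using 2 <;> fin_cases i <;> fin_cases j <;> rfl
  · rintro h f ⟨hf, hσ⟩
    refine h (f 0) (f 1) (f 2) (hf (by decide)) (hf (by decide)) fun i j => ?_
    convert hσ i j using 2 <;> fin_cases i <;> fin_cases j <;> rfl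

lemma forall_lt_iff_p132 {α : Type*} [LinearOrder α] {x y z : α} :
    (∀ i j : Fin 3, ![x, y, z] i < ![x, y, z] j ↔ p132 i < p132 j) ↔ x < z ∧ z < y := by
  refine ⟨fun h => ⟨(h 0 2).2 (by decide), (h 2 1).2 (by decide)⟩, fun ⟨hxz, hzy⟩ i j => ?_⟩
  fin_cases i <;> fin_cases j <;> simp [p132, swap_apply_of_ne_of_ne] <;> order

lemma forall_lt_iff_p321 {α : Type*} [LinearOrder α] {x y z : α} :
    (∀ i j : Fin 3, ![x, y, z] i < ![x, y, z] j ↔ p321 i < p321 j) ↔ z < y ∧ y < x := by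
  refine ⟨fun h => ⟨(h 2 1).2 (by decide), (h 1 0).2 (by decide)⟩, fun ⟨hzy, hyx⟩ i j => ?_⟩
  fin_cases i <;> fin_cases j <;> simp [p321, swap_apply_of_ne_of_ne] <;> order

lemma numOcc_p132_eq_zero_iff : numOcc p132 π = 0 ↔ Avoids132 π := by
  simp only [numOcc_eq_zero_iff_of_fin_three, forall_lt_iff_p132, Avoids132]

lemma numOcc_p321_eq_zero_iff : numOcc p321 π = 0 ↔ Avoids321 π := by
  simp only [numOcc_eq_zero_iff_of_fin_three, forall_lt_iff_p321, Avoids321]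

end Patterns

lemma StrictMonoOn.val_add_sub_le {m n : ℕ} {f : Fin n → Fin m} {s : Set (Fin n)}
    (hs : s.OrdConnected) (hf : StrictMonoOn f s) {i j : Fin n} (hi : i ∈ s) (hj : j ∈ s)
    (hij : i ≤ j) : (f i : ℕ) + (j - i) ≤ f j := by
  have hcard := Finset.card_le_card_of_injOn f (s := Finset.Icc i j) (t := Finset.Icc (f i) (f j))
    (fun x hx => by
      obtain ⟨hix, hxj⟩ := Finset.mem_Icc.1 hx
      have hx : x ∈ s := hs.out hi hj ⟨hix, hxj⟩
      exact Finset.mem_Icc.2 ⟨hf.monotoneOn hi hx hix, hf.monotoneOn hx hj hxj⟩)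
    (hf.injOn.mono fun x hx => hs.out hi hj (Finset.mem_Icc.1 hx))
  simp only [Fin.card_Icc] at hcard
  have : f i ≤ f j := hf.monotoneOn hi hj hij
  rw [Fin.le_def] at hij this
  omega

section Structure

variable {n : ℕ} {π : Perm (Fin n)}

lemma Avoids132.symm (h : Avoids132 π) : Avoids132 π.symm := fun a b c hab hbc ⟨hac, hcb⟩ =>
  h _ _ _ hac hcb ⟨by simpa using hab, by simpa using hbc⟩

lemma Avoids321.symm (h : Avoids321 π) : Avoids321 π.symm := fun a b c hab hbc ⟨hcb, hba⟩ =>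
  h _ _ _ hcb hba ⟨by simpa using hab, by simpa using hbc⟩

variable [NeZero n]

lemma zero_lt_apply_of_ne_symm_zero {j : Fin n} (hj : j ≠ π.symm 0) : 0 < π j :=
  Fin.pos_iff_ne_zero.2 fun h => hj (π.eq_symm_apply.2 h)

lemma Avoids321.strictMonoOn_Iio (h : Avoids321 π) : StrictMonoOn π (Set.Iio (π.symm 0)) := by
  intro i _ j hj hij
  by_contra hji
  have hji : π j < π i := (not_lt.1 hji).lt_of_ne (π.injective.ne hij.ne')
  refine h i j _ hij hj ⟨?_, hji⟩
  simpa using zero_lt_apply_of_ne_symm_zero (ne_of_lt hj)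

lemma Avoids132.strictMonoOn_Ici (h : Avoids132 π) : StrictMonoOn π (Set.Ici (π.symm 0)) := by
  intro i hi j _ hij
  by_contra hji
  have hji : π j < π i := (not_lt.1 hji).lt_of_ne (π.injective.ne hij.ne')
  rcases (Set.mem_Ici.1 hi).eq_or_lt with rfl | hki
  · simp at hji
  · refine h _ i j hki hij ⟨?_, hji⟩
    simpa using zero_lt_apply_of_ne_symm_zero (ne_of_gt (hki.trans hij))

lemma Avoids321.val_apply_zero_add_le (h : Avoids321 π) {i : Fin n} (hi : i < π.symm 0) :
    (π 0 : ℕ) + i ≤ π i := by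
  simpa using h.strictMonoOn_Iio.val_add_sub_le Set.ordConnected_Iio
    ((Fin.zero_le i).trans_lt hi) hi (Fin.zero_le i)

lemma Avoids132.val_sub_le_val_apply (h : Avoids132 π) {j : Fin n} (hj : π.symm 0 ≤ j) :
    (j : ℕ) - π.symm 0 ≤ π j := by
  simpa using h.strictMonoOn_Ici.val_add_sub_le Set.ordConnected_Ici (Set.mem_Ici.2 le_rfl) hj hj

lemma Avoids321.symm_zero_add_apply_zero_le (h : Avoids321 π) : (π.symm 0 : ℕ) + π 0 ≤ n := by
  rcases Nat.eq_zero_or_pos (π 0 : ℕ) with h0 | h0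
  · have : π.symm 0 = 0 := π.symm_apply_eq.2 (Fin.ext h0).symm
    simp [this, h0]
  · set v : Fin n := ⟨π 0 - 1, (Nat.sub_le _ _).trans_lt (π 0).isLt⟩
    have hv : v < π.symm.symm 0 := by rw [symm_symm, Fin.lt_def]; exact Nat.sub_lt h0 one_pos
    have := h.symm.val_apply_zero_add_le hv
    have := (π.symm v).isLt
    simp only [v] at *
    omega

variable (h132 : Avoids132 π) (h321 : Avoids321 π)
include h132 h321

lemma val_apply_eq_sub_of_avoids {j : Fin n} (hkj : π.symm 0 ≤ j)
    (hj : (j : ℕ) < π.symm 0 + π 0) : (π j : ℕ) = j - π.symm 0 := by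
  refine le_antisymm ?_ (h132.val_sub_le_val_apply hkj)
  rw [Fin.le_def] at hkj
  set v : Fin n := ⟨j - π.symm 0, by omega⟩
  have hv : (v : ℕ) = j - π.symm 0 := rfl
  have hσv : j ≤ π.symm v := by
    have := h321.symm.val_apply_zero_add_le (i := v) (by rw [symm_symm, Fin.lt_def]; omega)
    rw [Fin.le_def]
    omega
  calc (π j : ℕ) ≤ π (π.symm v) :=
        h132.strictMonoOn_Ici.monotoneOn (Fin.le_def.2 hkj) ((Fin.le_def.2 hkj).trans hσv) hσv
    _ = j - π.symm 0 := by simp [v]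

lemma symm_zero_add_apply_zero_le_val_apply {j : Fin n} (hj : (π.symm 0 : ℕ) + π 0 ≤ j) :
    (π.symm 0 : ℕ) + π 0 ≤ π j := by
  by_contra! hlt
  rcases lt_or_ge (π j : ℕ) (π 0) with hj0 | hj0
  · set p : Fin n := ⟨π.symm 0 + π j, by omega⟩
    have hp : (p : ℕ) = π.symm 0 + π j := rfl
    have hπp : π p = π j := Fin.ext <| by
      rw [val_apply_eq_sub_of_avoids h132 h321 (j := p) (Fin.le_def.2 (by omega)) (by omega)]
      omega
    have := congrArg Fin.val (π.injective hπp)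
    omega
  · have := val_apply_eq_sub_of_avoids h132.symm h321.symm (j := π j)
      (by rw [symm_symm, Fin.le_def]; exact hj0) (by rw [symm_symm]; omega)
    simp only [symm_apply_apply, symm_symm] at this
    omega

lemma val_le_val_apply_of_avoids {j : Fin n} (hj : (π.symm 0 : ℕ) + π 0 ≤ j) : (j : ℕ) ≤ π j := by
  set p : Fin n := ⟨π.symm 0 + π 0, by omega⟩
  have hp : (p : ℕ) = π.symm 0 + π 0 := rfl
  have hpj : p ≤ j := Fin.le_def.2 hj
  have hkp : π.symm 0 ≤ p := Fin.le_def.2 (by omega)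
  have := h132.strictMonoOn_Ici.val_add_sub_le Set.ordConnected_Ici hkp (hkp.trans hpj) hpj
  have := symm_zero_add_apply_zero_le_val_apply h132 h321 (j := p) hp.ge
  omega

lemma val_apply_eq_self_of_avoids {j : Fin n} (hj : (π.symm 0 : ℕ) + π 0 ≤ j) :
    (π j : ℕ) = j := by
  refine le_antisymm ?_ (val_le_val_apply_of_avoids h132 h321 hj)
  have hπj := symm_zero_add_apply_zero_le_val_apply h132 h321 hj
  simpa using val_le_val_apply_of_avoids h132.symm h321.symm (j := π j)
    (by rw [symm_symm, add_comm]; exact hπj)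

end Structure

def piKLMVal (k ℓ i : ℕ) : ℕ := if i < k then ℓ + i else if i < k + ℓ then i - k else i

section Formula

variable {n : ℕ}

lemma val_apply_eq_piKLMVal_of_avoids [NeZero n] {π : Perm (Fin n)} (h132 : Avoids132 π)
    (h321 : Avoids321 π) (i : Fin n) : (π i : ℕ) = piKLMVal (π.symm 0) (π 0) i := by
  have hkℓ := h321.symm_zero_add_apply_zero_le
  unfold piKLMVal
  split_ifs with hik hiℓ
  · set v : Fin n := ⟨π 0 + i, by omega⟩
    have hv : (v : ℕ) = π 0 + i := rfl
    have hσv := val_apply_eq_sub_of_avoids h132.symm h321.symm (j := v)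
      (by rw [symm_symm, Fin.le_def]; omega) (by rw [symm_symm]; omega)
    rw [symm_symm] at hσv
    rw [← π.symm_apply_eq.1 (Fin.ext (by omega) : π.symm v = i)]
  · exact val_apply_eq_sub_of_avoids h132 h321 (Fin.le_def.2 (not_lt.1 hik)) hiℓ
  · exact val_apply_eq_self_of_avoids h132 h321 (not_lt.1 hiℓ)

lemma avoids_of_val_eq_piKLMVal {π : Perm (Fin n)} {k ℓ : ℕ}
    (hπ : ∀ i, (π i : ℕ) = piKLMVal k ℓ i) : Avoids132 π ∧ Avoids321 π := by
  constructor <;>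
  · intro a b c hab hbc ⟨h1, h2⟩
    have ha := hπ a
    have hb := hπ b
    have hc := hπ c
    rw [Fin.lt_def] at hab hbc h1 h2
    unfold piKLMVal at ha hb hc
    split_ifs at ha hb hc <;> omega

lemma eq_of_piKLMVal_eq {k ℓ k' ℓ' : ℕ} (hk : 1 ≤ k) (hℓ : 1 ≤ ℓ) (hk' : 1 ≤ k')
    (h0 : piKLMVal k ℓ 0 = piKLMVal k' ℓ' 0) (hkk : piKLMVal k ℓ k = piKLMVal k' ℓ' k) :
    k = k' ∧ ℓ = ℓ' := by
  unfold piKLMVal at h0 hkk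
  split_ifs at h0 hkk <;> omega

lemma val_rotBlock (k ℓ : ℕ) (x : Fin (k + ℓ)) :
    (rotBlock k ℓ x : ℕ) = if (x : ℕ) < k then ℓ + x else x - k := by
  induction x using Fin.addCases with
  | left a => simp [rotBlock, a.isLt, add_comm]
  | right b => simp [rotBlock]

lemma val_piKLM (k ℓ m : ℕ) (i : Fin (k + ℓ + m)) :
    (piKLM k ℓ m i : ℕ) = piKLMVal k ℓ i := by
  unfold piKLMVal
  induction i using Fin.addCases with
  | left a =>
    simp only [piKLM, permComp, Equiv.permCongr_apply, finSumFinEquiv_symm_apply_castAdd,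
      Equiv.sumCongr_apply, Sum.map_inl, finSumFinEquiv_apply_left, Fin.val_castAdd, val_rotBlock]
    split_ifs <;> omega
  | right b =>
    simp only [piKLM, permComp, Equiv.permCongr_apply, finSumFinEquiv_symm_apply_natAdd,
      Equiv.sumCongr_apply, Sum.map_inr, Perm.coe_one, id_eq, finSumFinEquiv_apply_right,
      Fin.val_natAdd]
    split_ifs <;> omega

lemma val_permCongr_piKLM {k ℓ m : ℕ} (h : k + ℓ + m = n) (i : Fin n) :
    ((finCongr h).permCongr (piKLM k ℓ m) i : ℕ) = piKLMVal k ℓ i := by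
  simp [Equiv.permCongr_apply, val_piKLM]

end Formula

section Characterization

variable {n : ℕ}

def IsPiKLM (π : Perm (Fin n)) : Prop :=
  ∃ k ℓ, 1 ≤ k ∧ 1 ≤ ℓ ∧ k + ℓ ≤ n ∧ ∀ i, (π i : ℕ) = piKLMVal k ℓ i

theorem avoids_iff (π : Perm (Fin n)) :
    Avoids132 π ∧ Avoids321 π ↔ π = Equiv.refl (Fin n) ∨ IsPiKLM π := by
  constructor
  · rintro ⟨h132, h321⟩
    rcases Nat.eq_zero_or_pos n with rfl | hn
    · exact Or.inl (Subsingleton.elim _ _)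
    have : NeZero n := ⟨hn.ne'⟩
    have hπ := val_apply_eq_piKLMVal_of_avoids h132 h321
    by_cases hk : π.symm 0 = 0
    · have hℓ : π 0 = 0 := (π.symm_apply_eq.1 hk).symm
      left
      ext i
      simp [hπ, hk, hℓ, piKLMVal]
    · have hℓ : π 0 ≠ 0 := fun h => hk (π.symm_apply_eq.2 h.symm)
      refine Or.inr ⟨_, _, ?_, ?_, h321.symm_zero_add_apply_zero_le, hπ⟩
      · exact Fin.val_pos_iff.2 (Fin.pos_iff_ne_zero.2 hk)
      · exact Fin.val_pos_iff.2 (Fin.pos_iff_ne_zero.2 hℓ)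
  · rintro (rfl | ⟨k, ℓ, -, -, -, hπ⟩)
    · exact avoids_of_val_eq_piKLMVal (k := 0) (ℓ := 0) fun i => by simp [piKLMVal]
    · exact avoids_of_val_eq_piKLMVal hπ

lemma exists_eq_permCongr_piKLM_iff (π : Perm (Fin n)) :
    (∃ k ℓ m : ℕ, 1 ≤ k ∧ 1 ≤ ℓ ∧ ∃ h : k + ℓ + m = n,
        π = (finCongr h).permCongr (piKLM k ℓ m)) ↔
      IsPiKLM π := by
  constructor
  · rintro ⟨k, ℓ, m, hk, hℓ, h, rfl⟩
    exact ⟨k, ℓ, hk, hℓ, by omega, val_permCongr_piKLM h⟩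
  · rintro ⟨k, ℓ, hk, hℓ, hkℓ, hπ⟩
    refine ⟨k, ℓ, n - k - ℓ, hk, hℓ, by omega, ?_⟩
    ext i
    rw [hπ, val_permCongr_piKLM]

lemma card_subtype_eq_or {α : Type*} [Finite α] {p : α → Prop} {a : α} (ha : ¬ p a) :
    Nat.card {x // x = a ∨ p x} = Nat.card {x // p x} + 1 := by
  have := Set.ncard_insert_of_notMem (s := {x | p x}) ha
  rwa [← Nat.card_coe_set_eq, ← Nat.card_coe_set_eq] at this

lemma not_isPiKLM_refl : ¬ IsPiKLM (Equiv.refl (Fin n)) := by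
  rintro ⟨k, ℓ, hk, hℓ, hkℓ, h⟩
  have h0 : 0 = piKLMVal k ℓ 0 := h ⟨0, by omega⟩
  unfold piKLMVal at h0
  split_ifs at h0 <;> omega

lemma card_isPiKLM : Nat.card {π : Perm (Fin n) // IsPiKLM π} = n.choose 2 := by
  have hsum (a b : Fin n) (hab : a < b) : (a + 1 : ℕ) + (b - a) + (n - 1 - b) = n := by
    rw [Fin.lt_def] at hab
    omega
  let e : {x : Fin n × Fin n // x.1 < x.2} → {π : Perm (Fin n) // IsPiKLM π} := fun x =>
    ⟨(finCongr (hsum _ _ x.2)).permCongr (piKLM _ _ _), _, _, le_add_self, by omega, by omega,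
      val_permCongr_piKLM _⟩
  have he : Function.Bijective e := by
    constructor
    · rintro ⟨⟨a, b⟩, hab⟩ ⟨⟨a', b'⟩, hab'⟩ h
      have hval (i : Fin n) := congrArg (fun π => ((π.1 i : Fin n) : ℕ)) h
      simp only [e, val_permCongr_piKLM] at hval
      replace hab : (a : ℕ) < b := hab
      replace hab' : (a' : ℕ) < b' := hab'
      have := b.isLt
      obtain ⟨h1, h2⟩ := eq_of_piKLMVal_eq (by omega) (by omega) (by omega)
        (hval ⟨0, by omega⟩) (hval ⟨a + 1, by omega⟩)
      simp only [Subtype.mk.injEq, Prod.mk.injEq, Fin.ext_iff]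
      omega
    · rintro ⟨π, k, ℓ, hk, hℓ, hkℓ, hπ⟩
      refine ⟨⟨(⟨k - 1, by omega⟩, ⟨k + ℓ - 1, by omega⟩), Fin.mk_lt_mk.2 (by omega)⟩, ?_⟩
      ext i
      simp only [e, val_permCongr_piKLM, hπ]
      congr 1 <;> omega
  rw [← Nat.card_congr (Equiv.ofBijective e he), Nat.card_eq_fintype_card, Fintype.card_subtype,
    Fintype.card_product_filter_lt, Fintype.card_fin]

end Characterization

theorem avoid_132_321_characterization (n : ℕ) :
    (∀ π : Equiv.Perm (Fin n),
      (numOcc p132 π = 0 ∧ numOcc p321 π = 0) ↔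
        (π = Equiv.refl (Fin n) ∨
          ∃ k ℓ m : ℕ, 1 ≤ k ∧ 1 ≤ ℓ ∧ ∃ h : k + ℓ + m = n,
            π = (finCongr h).permCongr (piKLM k ℓ m))) ∧
    Nat.card {π : Equiv.Perm (Fin n) // numOcc p132 π = 0 ∧ numOcc p321 π = 0} =
      n.choose 2 + 1 := by
  have hchar (π : Perm (Fin n)) : (numOcc p132 π = 0 ∧ numOcc p321 π = 0) ↔
      π = Equiv.refl (Fin n) ∨ IsPiKLM π := by
    rw [numOcc_p132_eq_zero_iff, numOcc_p321_eq_zero_iff, avoids_iff]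
  refine ⟨fun π => by rw [hchar, exists_eq_permCongr_piKLM_iff], ?_⟩
  rw [Nat.card_congr (Equiv.subtypeEquivRight hchar), card_subtype_eq_or not_isPiKLM_refl,
    card_isPiKLM]
end

section
/- Let σ = π_{i,j,p} with i, j ≥ 1, p ≥ 0, and let k, ℓ ≥ 1, m ≥ 0. Then the number of occurrences of σ in π_{k,ℓ,m} equals binomial(k,i)·binomial(ℓ,j)·binomial(m,p). -/
open Set

lemma isOccurrence_iff_inversions {m n : ℕ} {σ : Equiv.Perm (Fin m)} {π : Equiv.Perm (Fin n)}
    {f : Fin m → Fin n} :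
    IsOccurrence σ π f ↔ StrictMono f ∧ ∀ a b, a < b → (π (f b) < π (f a) ↔ σ b < σ a) := by
  refine ⟨fun ⟨hf, h⟩ => ⟨hf, fun a b _ => h b a⟩, fun ⟨hf, h⟩ => ⟨hf, fun a b => ?_⟩⟩
  rcases lt_trichotomy a b with hab | rfl | hab
  · have hπ : π (f b) ≠ π (f a) := fun e => hab.ne' (hf.injective (π.injective e))
    rw [← not_iff_not, not_lt, not_lt, hπ.le_iff_lt, (σ.injective.ne hab.ne').le_iff_lt]
    exact h a b hab
  · simp
  · exact h b a hab

lemma piKLM_val {k ℓ m : ℕ} (x : Fin (k + ℓ + m)) :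
    (piKLM k ℓ m x : ℕ) = if (x : ℕ) < k then x + ℓ else if (x : ℕ) < k + ℓ then x - k else x := by
  induction x using Fin.addCases with
  | left y =>
    induction y using Fin.addCases with
    | left z => simp [piKLM, permComp, rotBlock, Equiv.permCongr]
    | right z => simp [piKLM, permComp, rotBlock, Equiv.permCongr]
  | right y => simp [piKLM, permComp, Equiv.permCongr, add_assoc]

lemma piKLM_lt_piKLM_iff {k ℓ m : ℕ} {x y : Fin (k + ℓ + m)} (hxy : x < y) :
    piKLM k ℓ m y < piKLM k ℓ m x ↔ (x : ℕ) < k ∧ k ≤ (y : ℕ) ∧ (y : ℕ) < k + ℓ := by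
  rw [Fin.lt_def] at hxy ⊢
  rw [piKLM_val, piKLM_val]
  split_ifs <;> omega

def RespectsCut {n N : ℕ} (a c : ℕ) (f : Fin n → Fin N) : Prop :=
  ∀ x, (f x : ℕ) < c ↔ (x : ℕ) < a

lemma respectsCut_iff_inversions {n N i j k ℓ : ℕ} {f : Fin n → Fin N} (hf : Monotone f)
    (hi : 0 < i) (hj : 0 < j) (hn : i < n) :
    (∀ a b, a < b → ((f a : ℕ) < k ∧ k ≤ (f b : ℕ) ∧ (f b : ℕ) < k + ℓ ↔
      (a : ℕ) < i ∧ i ≤ (b : ℕ) ∧ (b : ℕ) < i + j)) ↔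
      RespectsCut i k f ∧ RespectsCut (i + j) (k + ℓ) f := by
  constructor
  · intro H
    set u : Fin n := ⟨i - 1, by omega⟩
    set v : Fin n := ⟨i, hn⟩
    -- `(i - 1, i)` is an inversion of the pattern: `f u` lies in the first run, `f v` in the second
    obtain ⟨hfu, hfv, -⟩ :=
      (H u v (Fin.lt_def.2 (show i - 1 < i by omega))).2
        (show i - 1 < i ∧ i ≤ i ∧ i < i + j by omega)
    have below (x : Fin n) (hx : (x : ℕ) < i) : (f x : ℕ) < k :=
      (Fin.le_def.1 (hf (Fin.le_def.2 (show (x : ℕ) ≤ i - 1 by omega)))).trans_lt hfu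
    have above (x : Fin n) (hx : i ≤ (x : ℕ)) : k ≤ (f x : ℕ) :=
      hfv.trans (Fin.le_def.1 (hf (Fin.le_def.2 hx)))
    have inversion_u (x : Fin n) (hx : i ≤ (x : ℕ)) :=
      H u x (Fin.lt_def.2 (show i - 1 < (x : ℕ) by omega))
    refine ⟨fun x => ⟨fun hx => ?_, below x⟩, fun x => ⟨fun hx => ?_, fun hx => ?_⟩⟩
    · by_contra! hix
      have := above x hix
      omega
    · by_contra! hix
      have := (inversion_u x (by omega)).1 ⟨hfu, above x (by omega), hx⟩
      omega
    · by_cases hix : (x : ℕ) < i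
      · have := below x hix
        omega
      · exact ((inversion_u x (by omega)).2 ⟨show i - 1 < i by omega, by omega, hx⟩).2.2
  · rintro ⟨h₁, h₂⟩ a b -
    rw [h₁, h₂, ← not_lt, ← not_lt, h₁]

lemma isOccurrence_piKLM_iff {i j p k ℓ m : ℕ} (hi : 0 < i) (hj : 0 < j)
    {f : Fin (i + j + p) → Fin (k + ℓ + m)} :
    IsOccurrence (piKLM i j p) (piKLM k ℓ m) f ↔
      StrictMono f ∧ RespectsCut i k f ∧ RespectsCut (i + j) (k + ℓ) f := by
  rw [isOccurrence_iff_inversions]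
  refine and_congr_right fun hf => ?_
  rw [← respectsCut_iff_inversions hf.monotone hi hj (by omega)]
  refine forall₂_congr fun a b => imp_congr_right fun hab => ?_
  rw [piKLM_lt_piKLM_iff (hf hab), piKLM_lt_piKLM_iff hab]

section BlockAppend

variable {a b c d : ℕ}

def blockAppend (g : Fin a → Fin c) (h : Fin b → Fin d) : Fin (a + b) → Fin (c + d) :=
  Fin.append (Fin.castAdd d ∘ g) (Fin.natAdd c ∘ h)

@[simp]
lemma blockAppend_castAdd (g : Fin a → Fin c) (h : Fin b → Fin d) (x : Fin a) :
    blockAppend g h (Fin.castAdd b x) = Fin.castAdd d (g x) :=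
  Fin.append_left _ _ x

@[simp]
lemma blockAppend_natAdd (g : Fin a → Fin c) (h : Fin b → Fin d) (y : Fin b) :
    blockAppend g h (Fin.natAdd a y) = Fin.natAdd c (h y) :=
  Fin.append_right _ _ y

lemma blockAppend_injective2 :
    Function.Injective2 (blockAppend : (Fin a → Fin c) → (Fin b → Fin d) → _) := by
  intro g g' h h' e
  exact ⟨funext fun x => by simpa using congrFun e (Fin.castAdd b x),
    funext fun y => by simpa using congrFun e (Fin.natAdd a y)⟩

lemma strictMono_blockAppend_iff {g : Fin a → Fin c} {h : Fin b → Fin d} :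
    StrictMono (blockAppend g h) ↔ StrictMono g ∧ StrictMono h := by
  refine ⟨fun hgh => ⟨fun x y hxy => ?_, fun x y hxy => ?_⟩, fun ⟨hg, hh⟩ x y hxy => ?_⟩
  · exact (Fin.strictMono_castAdd d).lt_iff_lt.1 (by simpa using hgh (Fin.strictMono_castAdd b hxy))
  · simpa using hgh (Fin.strictMono_natAdd a hxy)
  · induction x using Fin.addCases with
    | left x => induction y using Fin.addCases with
      | left y =>
        simpa using Fin.strictMono_castAdd d (hg ((Fin.strictMono_castAdd b).lt_iff_lt.1 hxy))
      | right y => simp only [blockAppend_castAdd, blockAppend_natAdd, Fin.lt_def, Fin.val_castAdd,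
          Fin.val_natAdd]; omega
    | right x => induction y using Fin.addCases with
      | left y => simp only [Fin.lt_def, Fin.val_natAdd, Fin.val_castAdd] at hxy; omega
      | right y => simpa using hh (by simpa using hxy)

lemma respectsCut_iff_exists_blockAppend {f : Fin (a + b) → Fin (c + d)} :
    RespectsCut a c f ↔ ∃ g h, blockAppend g h = f := by
  refine ⟨fun hf => ?_, ?_⟩
  · refine ⟨fun x => ⟨f (Fin.castAdd b x), (hf _).2 (by simp)⟩,
      fun y => ⟨f (Fin.natAdd a y) - c, ?_⟩, funext fun x => ?_⟩
    · have := (hf (Fin.natAdd a y)).not.2 (by simp)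
      omega
    · induction x using Fin.addCases with
      | left x => ext; simp
      | right y =>
        have := (hf (Fin.natAdd a y)).not.2 (by simp)
        ext; simp only [blockAppend_natAdd, Fin.natAdd_mk]; omega
  · rintro ⟨g, h, rfl⟩ x
    induction x using Fin.addCases <;> simp

lemma respectsCut_blockAppend_iff {a' c' : ℕ} (ha : a' ≤ a) (hc : c' ≤ c)
    {g : Fin a → Fin c} {h : Fin b → Fin d} :
    RespectsCut a' c' (blockAppend g h) ↔ RespectsCut a' c' g := by
  refine ⟨fun H x => by simpa using H (Fin.castAdd b x), fun H x => ?_⟩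
  induction x using Fin.addCases with
  | left x => simpa using H x
  | right y => simp only [blockAppend_natAdd, Fin.val_natAdd]; omega

lemma ncard_image2_blockAppend (S : Set (Fin a → Fin c)) (T : Set (Fin b → Fin d)) :
    (image2 blockAppend S T).ncard = S.ncard * T.ncard := by
  rw [← image_uncurry_prod, ncard_image_of_injective _ blockAppend_injective2.uncurry, ncard_prod]

end BlockAppend

lemma strictMono_respectsCut_iff_mem_image2 {i j p k ℓ m : ℕ}
    {f : Fin (i + j + p) → Fin (k + ℓ + m)} :
    StrictMono f ∧ RespectsCut i k f ∧ RespectsCut (i + j) (k + ℓ) f ↔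
      f ∈ image2 blockAppend (image2 blockAppend {g | StrictMono g} {g | StrictMono g})
        {g | StrictMono g} := by
  constructor
  · rintro ⟨hf, hcut, hcut'⟩
    obtain ⟨G, h, rfl⟩ := respectsCut_iff_exists_blockAppend.1 hcut'
    obtain ⟨hG, hh⟩ := strictMono_blockAppend_iff.1 hf
    rw [respectsCut_blockAppend_iff (by omega) (by omega)] at hcut
    obtain ⟨g₁, g₂, rfl⟩ := respectsCut_iff_exists_blockAppend.1 hcut
    obtain ⟨hg₁, hg₂⟩ := strictMono_blockAppend_iff.1 hG
    exact mem_image2_of_mem (mem_image2_of_mem hg₁ hg₂) hh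
  · rintro ⟨_, ⟨g₁, hg₁, g₂, hg₂, rfl⟩, h, hh, rfl⟩
    refine ⟨strictMono_blockAppend_iff.2 ⟨strictMono_blockAppend_iff.2 ⟨hg₁, hg₂⟩, hh⟩, ?_,
      respectsCut_iff_exists_blockAppend.2 ⟨_, _, rfl⟩⟩
    rw [respectsCut_blockAppend_iff (by omega) (by omega)]
    exact respectsCut_iff_exists_blockAppend.2 ⟨_, _, rfl⟩

lemma ncard_setOf_strictMono (a b : ℕ) : {g : Fin a → Fin b | StrictMono g}.ncard = b.choose a := by
  have hinj : InjOn (fun g : Fin a → Fin b => Finset.univ.image g) {g | StrictMono g} :=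
    fun g hg g' hg' e => (hg.range_inj hg').1
      (by simpa using congrArg ((↑) : Finset (Fin b) → Set (Fin b)) e)
  have himage : (fun g : Fin a → Fin b => Finset.univ.image g) '' {g | StrictMono g} =
      Set.powersetCard (Fin b) a := by
    ext s
    refine ⟨?_, fun hs => ⟨s.orderEmbOfFin hs, (s.orderEmbOfFin hs).strictMono,
      s.image_orderEmbOfFin_univ hs⟩⟩
    rintro ⟨g, hg, rfl⟩
    simp [Set.powersetCard.mem_iff, Finset.card_image_of_injective _ hg.injective]
  rw [← hinj.ncard_image, himage, ← Nat.card_coe_set_eq, Set.powersetCard.card,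
    Nat.card_fin]

theorem numOcc_piKLM_general (i j p k ℓ m : ℕ) (hi : 1 ≤ i) (hj : 1 ≤ j) :
    numOcc (piKLM i j p) (piKLM k ℓ m) = k.choose i * ℓ.choose j * m.choose p := by
  have hocc : {f | IsOccurrence (piKLM i j p) (piKLM k ℓ m) f} =
      image2 blockAppend (image2 blockAppend {g | StrictMono g} {g | StrictMono g})
        {g | StrictMono g} :=
    ext fun _ => (isOccurrence_piKLM_iff hi hj).trans strictMono_respectsCut_iff_mem_image2
  calc numOcc (piKLM i j p) (piKLM k ℓ m)
      = {f | IsOccurrence (piKLM i j p) (piKLM k ℓ m) f}.ncard := Nat.card_coe_set_eq _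
    _ = k.choose i * ℓ.choose j * m.choose p := by
      rw [hocc, ncard_image2_blockAppend, ncard_image2_blockAppend, ncard_setOf_strictMono,
        ncard_setOf_strictMono, ncard_setOf_strictMono]

theorem numOcc_piKLM (i j p k ℓ m : ℕ) (hi : 1 ≤ i) (hj : 1 ≤ j) (hk : 1 ≤ k) (hl : 1 ≤ ℓ) :
    numOcc (piKLM i j p) (piKLM k ℓ m) = k.choose i * ℓ.choose j * m.choose p :=
  numOcc_piKLM_general i j p k ℓ m hi hj
end

section
/- A permutation π avoids all three patterns 231, 312, and 321 if and only if every block in its decomposition into indecomposable permutations is decreasing of length at most 2, i.e., each block is either 1 or 21. -/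
/-! The three patterns are exactly the patterns of length three whose first entry exceeds the
last, so `π` avoids them iff `π i < π k` whenever `k ≥ i + 2`: an inversion `π k < π i` with
`k ≥ i + 2` forms one of them together with the entry at `i + 1`. This property holds for blocks of
length at most two and is preserved by direct sums. Conversely, under it the value `0` sits at
position `0` or `1`; in the second case the value `1` sits at position `0`, so `π` splits off a
first block `1` or `21` and the rest has the same property. -/

open Equiv

def HasOnlyAdjacentInversions {n : ℕ} (π : Perm (Fin n)) : Prop :=
  ∀ i k : Fin n, i.val + 2 ≤ k.val → π i < π k

def SPerm.IsShortDecreasing (q : SPerm) : Prop :=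
  1 ≤ q.1 ∧ q.1 ≤ 2 ∧ q.2 = (Fin.revPerm : Perm (Fin q.1))

section Patterns

variable {n : ℕ} {π : Perm (Fin n)}

theorem numOcc_ne_zero_of_strictMono {m : ℕ} {σ : Perm (Fin m)} {f : Fin m → Fin n}
    (hf : StrictMono f) (hσ : StrictMono (π ∘ f ∘ σ.symm)) : numOcc σ π ≠ 0 :=
  have hocc : IsOccurrence σ π f :=
    ⟨hf, fun j k => by simpa using hσ.lt_iff_lt (a := σ j) (b := σ k)⟩
  (Nat.card_pos_iff.2 ⟨⟨⟨f, hocc⟩⟩, Subtype.finite⟩).ne'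

theorem HasOnlyAdjacentInversions.numOcc_eq_zero (hπ : HasOnlyAdjacentInversions π)
    {σ : Perm (Fin 3)} (hσ : σ 2 < σ 0) : numOcc σ π = 0 := by
  refine Nat.card_eq_zero.2 (Or.inl ⟨fun ⟨f, hf, hfσ⟩ => ?_⟩)
  have h01 := hf (show (0 : Fin 3) < 1 by decide)
  have h12 := hf (show (1 : Fin 3) < 2 by decide)
  have h02 : (f 0).val + 2 ≤ (f 2).val := by rw [Fin.lt_def] at h01 h12; omega
  exact hσ.not_gt ((hfσ 0 2).1 (hπ _ _ h02))

theorem numOcc_ne_zero_of_inversion {i j k : Fin n} (hij : i < j) (hjk : j < k)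
    (hik : π k < π i) : numOcc p231 π ≠ 0 ∨ numOcc p312 π ≠ 0 ∨ numOcc p321 π ≠ 0 := by
  have hf : StrictMono ![i, j, k] := Fin.strictMono_iff_lt_succ.2 fun t => by
    fin_cases t <;> simpa
  have hπj : π j ≠ π i ∧ π j ≠ π k := ⟨fun h => hij.ne' (π.injective h),
    fun h => hjk.ne (π.injective h)⟩
  have e231 : p231.symm 0 = 2 ∧ p231.symm 1 = 0 ∧ p231.symm 2 = 1 := by decide
  have e312 : p312.symm 0 = 1 ∧ p312.symm 1 = 2 ∧ p312.symm 2 = 0 := by decide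
  have e321 : p321.symm 0 = 2 ∧ p321.symm 1 = 1 ∧ p321.symm 2 = 0 := by decide
  rcases lt_or_gt_of_ne hπj.1 with hπji | hπij
  · rcases lt_or_gt_of_ne hπj.2 with hπjk | hπkj
    · refine Or.inr (Or.inl (numOcc_ne_zero_of_strictMono hf
        (Fin.strictMono_iff_lt_succ.2 fun t => ?_)))
      fin_cases t <;> simpa [e312]
    · refine Or.inr (Or.inr (numOcc_ne_zero_of_strictMono hf
        (Fin.strictMono_iff_lt_succ.2 fun t => ?_)))
      fin_cases t <;> simpa [e321]
  · refine Or.inl (numOcc_ne_zero_of_strictMono hf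
      (Fin.strictMono_iff_lt_succ.2 fun t => ?_))
    fin_cases t <;> simpa [e231]

theorem avoids_231_312_321_iff_hasOnlyAdjacentInversions :
    (numOcc p231 π = 0 ∧ numOcc p312 π = 0 ∧ numOcc p321 π = 0) ↔
      HasOnlyAdjacentInversions π := by
  refine ⟨fun ⟨h231, h312, h321⟩ i k hik => ?_, fun hπ =>
    ⟨hπ.numOcc_eq_zero (by decide), hπ.numOcc_eq_zero (by decide),
      hπ.numOcc_eq_zero (by decide)⟩⟩
  by_contra! hki
  have hj : i.val + 1 < n := by omega
  have hik' : π k < π i := hki.lt_of_ne fun h => by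
    have := congrArg Fin.val (π.injective h); omega
  have := numOcc_ne_zero_of_inversion (j := ⟨i.val + 1, hj⟩) (Fin.lt_def.2 (Nat.lt_succ_self _))
    (Fin.lt_def.2 (show i.val + 1 < k.val by omega)) hik'
  tauto

end Patterns

section DirectSum

variable {m k : ℕ}

@[simp]
theorem permComp_apply_castAdd (σ : Perm (Fin m)) (τ : Perm (Fin k)) (i : Fin m) :
    permComp σ τ (Fin.castAdd k i) = Fin.castAdd k (σ i) := by
  simp [permComp, Equiv.permCongr_apply]

@[simp]
theorem permComp_apply_natAdd (σ : Perm (Fin m)) (τ : Perm (Fin k)) (i : Fin k) :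
    permComp σ τ (Fin.natAdd m i) = Fin.natAdd m (τ i) := by
  simp [permComp, Equiv.permCongr_apply]

theorem exists_eq_permComp {π : Perm (Fin (m + k))} {σ : Perm (Fin m)}
    (h : ∀ i, π (Fin.castAdd k i) = Fin.castAdd k (σ i)) : ∃ τ, π = permComp σ τ := by
  set ρ : Perm (Fin m ⊕ Fin k) := finSumFinEquiv.symm.permCongr π with hρ
  have hρ_inl (i : Fin m) : ρ (Sum.inl i) = Sum.inl (σ i) := by simp [hρ, h]
  obtain ⟨⟨σ', τ⟩, hστ⟩ := Perm.mem_sumCongrHom_range_of_perm_mapsTo_inl (σ := ρ)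
    (by rintro _ ⟨i, rfl⟩; exact ⟨σ i, (hρ_inl i).symm⟩)
  have hσ' : σ' = σ := Equiv.ext fun i => Sum.inl_injective <| by
    rw [← hρ_inl, ← hστ]
    rfl
  refine ⟨τ, ?_⟩
  subst hσ'
  change π = finSumFinEquiv.permCongr (Perm.sumCongrHom _ _ (σ', τ))
  ext x
  simp [hστ, hρ]

theorem hasOnlyAdjacentInversions_permComp_iff {σ : Perm (Fin m)} {τ : Perm (Fin k)} :
    HasOnlyAdjacentInversions (permComp σ τ) ↔
      HasOnlyAdjacentInversions σ ∧ HasOnlyAdjacentInversions τ := by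
  refine ⟨fun h => ⟨fun i j hij => ?_, fun i j hij => ?_⟩, fun ⟨hσ, hτ⟩ i j hij => ?_⟩
  · simpa [(Fin.strictMono_castAdd k).lt_iff_lt] using
      h (Fin.castAdd k i) (Fin.castAdd k j) (by simpa)
  · simpa using h (Fin.natAdd m i) (Fin.natAdd m j) (by simp only [Fin.val_natAdd]; omega)
  · induction i using Fin.addCases with
    | left i =>
      induction j using Fin.addCases with
      | left j =>
        simpa [(Fin.strictMono_castAdd k).lt_iff_lt] using hσ i j (by simpa using hij)
      | right j =>
        simp only [permComp_apply_castAdd, permComp_apply_natAdd, Fin.lt_def, Fin.val_castAdd,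
          Fin.val_natAdd]
        omega
    | right i =>
      induction j using Fin.addCases with
      | left j => simp only [Fin.val_natAdd, Fin.val_castAdd] at hij; omega
      | right j => simpa using hτ i j (by simp only [Fin.val_natAdd] at hij; omega)

end DirectSum

section Blocks

theorem hasOnlyAdjacentInversions_of_le_two {n : ℕ} (π : Perm (Fin n)) (hn : n ≤ 2) :
    HasOnlyAdjacentInversions π :=
  fun _ k hik => absurd k.isLt (by omega)

theorem hasOnlyAdjacentInversions_foldr_comp (L : List SPerm) (hL : ∀ q ∈ L, q.1 ≤ 2) :
    HasOnlyAdjacentInversions (L.foldr SPerm.comp ⟨0, 1⟩).2 := by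
  induction L with
  | nil => exact hasOnlyAdjacentInversions_of_le_two _ (Nat.zero_le _)
  | cons q L ih =>
    exact hasOnlyAdjacentInversions_permComp_iff.2
      ⟨hasOnlyAdjacentInversions_of_le_two _ (hL q List.mem_cons_self),
        ih fun q' hq' => hL q' (List.mem_cons_of_mem q hq')⟩

variable {n : ℕ} {π : Perm (Fin n)}

theorem HasOnlyAdjacentInversions.val_le_one_of_apply_le (hπ : HasOnlyAdjacentInversions π)
    {i j : Fin n} (hi : i.val = 0) (hji : π j ≤ π i) : j.val ≤ 1 := by
  by_contra! hj
  exact (hπ i j (by omega)).not_ge hji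

theorem exists_isShortDecreasing_comp_of_apply_castAdd {m k : ℕ} {π : Perm (Fin (m + k))}
    (hπ : HasOnlyAdjacentInversions π) (hm : 1 ≤ m ∧ m ≤ 2)
    (h : ∀ i, π (Fin.castAdd k i) = Fin.castAdd k i.rev) :
    ∃ b q : SPerm, b.IsShortDecreasing ∧ HasOnlyAdjacentInversions q.2 ∧ q.1 < m + k ∧
      (⟨m + k, π⟩ : SPerm) = b.comp q := by
  obtain ⟨τ, rfl⟩ := exists_eq_permComp (σ := Fin.revPerm) h
  exact ⟨⟨m, Fin.revPerm⟩, ⟨k, τ⟩, ⟨hm.1, hm.2, rfl⟩,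
    (hasOnlyAdjacentInversions_permComp_iff.1 hπ).2, show k < m + k by omega, rfl⟩

theorem HasOnlyAdjacentInversions.exists_isShortDecreasing_comp
    (hπ : HasOnlyAdjacentInversions π) (hn : n ≠ 0) :
    ∃ b q : SPerm, b.IsShortDecreasing ∧ HasOnlyAdjacentInversions q.2 ∧ q.1 < n ∧
      (⟨n, π⟩ : SPerm) = b.comp q := by
  have hn0 : 0 < n := Nat.pos_of_ne_zero hn
  obtain ⟨j, hj⟩ := π.surjective ⟨0, hn0⟩
  have hj1 : j.val ≤ 1 :=
    hπ.val_le_one_of_apply_le (i := ⟨0, hn0⟩) rfl (by rw [hj]; exact Nat.zero_le _)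
  rcases Nat.le_one_iff_eq_zero_or_eq_one.1 hj1 with hj0 | hj1
  · obtain ⟨k, rfl⟩ : ∃ k, n = 1 + k := ⟨n - 1, by omega⟩
    refine exists_isShortDecreasing_comp_of_apply_castAdd hπ ⟨le_rfl, one_le_two⟩ fun i => ?_
    have hi : Fin.castAdd k i = j := Fin.ext (by simp only [Fin.val_castAdd]; omega)
    ext
    simp [hi, hj]
  · have hn2 : 1 < n := hj1 ▸ j.isLt
    obtain ⟨j', hj'⟩ := π.surjective ⟨1, hn2⟩
    have hj'0 : j'.val = 0 := by
      have h0 : (π ⟨0, hn0⟩).val ≠ 0 := fun h => by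
        have : (0 : ℕ) = j.val := congrArg Fin.val (π.injective ((Fin.ext h).trans hj.symm))
        omega
      have := hπ.val_le_one_of_apply_le (i := ⟨0, hn0⟩) rfl (by
        rw [hj', Fin.le_def]
        show 1 ≤ (π ⟨0, hn0⟩).val
        omega)
      have : j' ≠ j := fun h => by simp [h, hj] at hj'
      omega
    obtain ⟨k, rfl⟩ : ∃ k, n = 2 + k := ⟨n - 2, by omega⟩
    refine exists_isShortDecreasing_comp_of_apply_castAdd hπ ⟨one_le_two, le_rfl⟩
      (Fin.forall_fin_two.2 ⟨?_, ?_⟩)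
    · rw [show Fin.castAdd k 0 = j' from Fin.ext (by simp only [Fin.val_castAdd]; omega), hj']
      rfl
    · rw [show Fin.castAdd k 1 = j from Fin.ext (by simp only [Fin.val_castAdd]; omega), hj]
      rfl

theorem HasOnlyAdjacentInversions.exists_foldr_comp (hπ : HasOnlyAdjacentInversions π) :
    ∃ L : List SPerm, (∀ q ∈ L, q.IsShortDecreasing) ∧ L.foldr SPerm.comp ⟨0, 1⟩ = ⟨n, π⟩ := by
  induction n using Nat.strong_induction_on with
  | _ n ih =>
    rcases eq_or_ne n 0 with rfl | hn
    · exact ⟨[], List.forall_mem_nil _, by rw [Subsingleton.elim π 1]; rfl⟩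
    obtain ⟨b, ⟨k, τ⟩, hb, hτ, hk, hbτ⟩ := hπ.exists_isShortDecreasing_comp hn
    obtain ⟨L, hL, hLτ⟩ := ih k hk hτ
    exact ⟨b :: L, List.forall_mem_cons.2 ⟨hb, hL⟩, (congrArg b.comp hLτ).trans hbτ.symm⟩

end Blocks

theorem avoids_231_312_321_iff_blocks_short_decreasing {n : ℕ} (π : Equiv.Perm (Fin n)) :
    (numOcc p231 π = 0 ∧ numOcc p312 π = 0 ∧ numOcc p321 π = 0) ↔
      ∃ L : List SPerm,
        (∀ q ∈ L, 1 ≤ q.1 ∧ q.1 ≤ 2 ∧ q.2 = (Fin.revPerm : Equiv.Perm (Fin q.1))) ∧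
        L.foldr SPerm.comp ⟨0, 1⟩ = ⟨n, π⟩ := by
  rw [avoids_231_312_321_iff_hasOnlyAdjacentInversions]
  refine ⟨HasOnlyAdjacentInversions.exists_foldr_comp, fun ⟨L, hL, hLπ⟩ => ?_⟩
  have hfoldr := hasOnlyAdjacentInversions_foldr_comp L fun q hq => (hL q hq).2.1
  rwa [hLπ] at hfoldr
end

section
/- Let X be a geometric random variable with P(X = k) = 2^{−k} for k ≥ 1. Then for nonnegative integers k, ℓ with (k,ℓ) ≠ (0,0), E[ C(X,k)·C(X,ℓ) ] = 2·D(k,ℓ), where D(k,ℓ) = Σ_{i=0}^{min(k,ℓ)} (k+ℓ−i)! / ((k−i)!·(ℓ−i)!·i!) is the Delannoy number. Equivalently, Σ_{x≥1} 2^{−x}·C(x,k)·C(x,ℓ) = 2·D(k,ℓ). -/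
/-!
Choosing which `i` of the `ℓ` elements picked from `x` lie inside a fixed `k`-subset
(Vandermonde) linearises the product of binomials:
`C(x,k) C(x,ℓ) = ∑ᵢ C(k,i) C(k+ℓ-i,k) C(x,k+ℓ-i)`.
By the negative binomial series every `C(X,n)` has mean `∑ₓ 2⁻ˣ C(x,n) = 2`, and
`∑ᵢ C(k,i) C(k+ℓ-i,k)` is the Delannoy number `D(k,ℓ)`.
-/

/-- The Delannoy number `D(k,ℓ)`, as a real number. -/
noncomputable def delannoy (k ℓ : ℕ) : ℝ :=
  ∑ i ∈ Finset.range (min k ℓ + 1),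
    ((k + ℓ - i).factorial : ℝ) / ((k - i).factorial * (ℓ - i).factorial * i.factorial)

open Finset Nat

theorem Nat.choose_mul_choose_eq_sum (x k ℓ : ℕ) :
    x.choose k * x.choose ℓ =
      ∑ i ∈ range (ℓ + 1), k.choose i * ((k + ℓ - i).choose k * x.choose (k + ℓ - i)) := by
  rcases lt_or_ge x k with hxk | hkx
  · rw [choose_eq_zero_of_lt hxk, zero_mul]
    refine (sum_eq_zero fun i hi => ?_).symm
    rw [choose_eq_zero_of_lt (by grind : x < k + ℓ - i), mul_zero, mul_zero]
  · obtain ⟨y, rfl⟩ := Nat.exists_eq_add_of_le hkx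
    rw [add_choose_eq k y ℓ, sum_antidiagonal_eq_sum_range_succ_mk, mul_sum]
    refine sum_congr rfl fun i hi => ?_
    have hiℓ : i ≤ ℓ := le_of_lt_succ (mem_range.1 hi)
    -- choose `k + ℓ - i` of the `k + y` elements, then `k` among those
    have h := choose_mul (n := k + y) (k := k + ℓ - i) (s := k) (by omega)
    rw [Nat.add_sub_cancel_left, show k + ℓ - i - k = ℓ - i by omega] at h
    rw [mul_left_comm, ← h, mul_comm (choose _ (k + ℓ - i))]

theorem Nat.add_choose_mul_add_add_choose_mul_factorial (a b c : ℕ) :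
    (c + a).choose c * (c + a + b).choose (c + a) * (a ! * b ! * c !) = (c + a + b)! := by
  have h₁ := add_choose_mul_factorial_mul_factorial a c
  have h₂ := add_choose_mul_factorial_mul_factorial b (c + a)
  rw [Nat.add_comm a] at h₁
  rw [Nat.add_comm b] at h₂
  rw [← h₂, ← h₁]
  ring

theorem delannoy_eq_sum_choose (k ℓ : ℕ) :
    delannoy k ℓ = ∑ i ∈ range (ℓ + 1), (k.choose i * (k + ℓ - i).choose k : ℝ) := by
  rw [delannoy, ← sum_subset (range_subset_range.2 (succ_le_succ (min_le_right k ℓ)))]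
  · refine sum_congr rfl fun i hmem => ?_
    have hi : i ≤ min k ℓ := le_of_lt_succ (mem_range.1 hmem)
    obtain ⟨a, rfl⟩ := Nat.exists_eq_add_of_le (hi.trans (min_le_left k ℓ))
    obtain ⟨b, rfl⟩ := Nat.exists_eq_add_of_le (hi.trans (min_le_right _ ℓ))
    have h := add_choose_mul_add_add_choose_mul_factorial a b i
    rw [show i + a + (i + b) - i = i + a + b by omega, Nat.add_sub_cancel_left,
      Nat.add_sub_cancel_left, div_eq_iff (by positivity), ← h]
    push_cast
    ring
  · intro i hiℓ hik
    rw [choose_eq_zero_of_lt (by grind), cast_zero, zero_mul]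

theorem hasSum_choose_mul_geometric {𝕜 : Type*} [NormedField 𝕜]
    (n : ℕ) {r : 𝕜} (hr : ‖r‖ < 1) :
    HasSum (fun x : ℕ => (x.choose n : 𝕜) * r ^ x) (r ^ n / (1 - r) ^ (n + 1)) := by
  have h := (hasSum_choose_mul_geometric_of_norm_lt_one n hr).mul_left (r ^ n)
  rw [mul_one_div] at h
  refine (hasSum_nat_add_iff' n).1 ?_
  rw [sum_eq_zero fun i hi => by rw [choose_eq_zero_of_lt (mem_range.1 hi), cast_zero, zero_mul],
    sub_zero]
  exact h.congr_fun fun x => by rw [pow_add]; ring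

theorem hasSum_choose_mul_two_inv_pow (n : ℕ) :
    HasSum (fun x : ℕ => (x.choose n : ℝ) * 2⁻¹ ^ x) 2 := by
  have h := hasSum_choose_mul_geometric n (r := (2⁻¹ : ℝ)) (by norm_num)
  rwa [show (1 : ℝ) - 2⁻¹ = 2⁻¹ by norm_num, pow_succ, div_mul_cancel_left₀ (by positivity),
    inv_inv] at h

theorem geometric_binomial_moment_general (k ℓ : ℕ) :
    ∑' x : ℕ, ((2 : ℝ)⁻¹) ^ x * (x.choose k) * (x.choose ℓ) = 2 * delannoy k ℓ := by
  have h : HasSum (fun x : ℕ => ((2 : ℝ)⁻¹) ^ x * (x.choose k) * (x.choose ℓ))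
      (∑ i ∈ range (ℓ + 1), (k.choose i * (k + ℓ - i).choose k : ℝ) * 2) := by
    refine (hasSum_sum fun i _ => (hasSum_choose_mul_two_inv_pow (k + ℓ - i)).mul_left
      (k.choose i * (k + ℓ - i).choose k : ℝ)).congr_fun fun x => ?_
    rw [mul_assoc, mul_comm, ← cast_mul, choose_mul_choose_eq_sum, cast_sum, sum_mul]
    exact sum_congr rfl fun i _ => by push_cast; ring
  rw [h.tsum_eq, delannoy_eq_sum_choose, ← sum_mul, mul_comm]

/-- For `X ~ Ge(1/2)` with `P(X = x) = 2⁻ˣ` for `x ≥ 1`,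
`E[C(X,k)·C(X,ℓ)] = 2·D(k,ℓ)` whenever `(k,ℓ) ≠ (0,0)`. -/
theorem geometric_binomial_moment (k ℓ : ℕ) (h : ¬ (k = 0 ∧ ℓ = 0)) :
    ∑' x : ℕ, ((2 : ℝ)⁻¹) ^ x * (x.choose k) * (x.choose ℓ) = 2 * delannoy k ℓ :=
  geometric_binomial_moment_general k ℓ
end

section
/- Let π ∈ S_n avoid 231 and 312, with block lengths L_1, ..., L_B (each block is decreasing), and let σ avoid 231 and 312 with block lengths ℓ_1, ..., ℓ_b. Then the number of occurrences of σ in π equals the sum over 1 ≤ i_1 < ... < i_b ≤ B of the product over j = 1..b of binomial(L_{i_j}, ℓ_j). -/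
/-- The permutation whose blocks are decreasing with lengths given by `L`. -/
def decPerm : (L : List ℕ) → Equiv.Perm (Fin L.sum)
  | [] => 1
  | ℓ :: L => (finCongr (by simp) : Fin (ℓ + L.sum) ≃ Fin ((ℓ :: L).sum)).permCongr
      (permComp (Fin.revPerm : Equiv.Perm (Fin ℓ)) (decPerm L))

section

variable {α β : Type*} [LinearOrder α] [Finite α] [LinearOrder β] [Finite β]

theorem card_strictMono_eq_choose :
    Nat.card {f : α → β // StrictMono f} = (Nat.card β).choose (Nat.card α) := by
  classical
  have := Fintype.ofFinite α
  have := Fintype.ofFinite β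
  rw [Nat.card_eq_fintype_card (α := α), Nat.card_eq_fintype_card (α := β),
    ← Fintype.card_finset_len, ← Nat.card_eq_fintype_card]
  refine Nat.card_congr (.ofBijective (fun f => ⟨Finset.univ.image f.1, by
    rw [Finset.card_image_of_injective _ f.2.injective, Finset.card_univ]⟩) ⟨?_, ?_⟩)
  · intro f g hfg
    apply Subtype.ext
    rw [← f.2.range_inj g.2, ← Set.image_univ, ← Set.image_univ]
    simpa using congrArg (fun s => (s.1 : Set β)) hfg
  · rintro ⟨s, hs⟩
    let e : α ↪o β :=
      (Fintype.orderIsoFinOfCardEq α rfl).symm.toOrderEmbedding.trans (s.orderEmbOfFin hs)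
    refine ⟨⟨e, e.strictMono⟩, Subtype.ext (Finset.coe_injective ?_)⟩
    rw [Finset.coe_image, Finset.coe_univ, Set.image_univ, ← s.range_orderEmbOfFin hs]
    exact (Fintype.orderIsoFinOfCardEq α rfl).symm.surjective.range_comp (s.orderEmbOfFin hs)

end

section Blocks

variable {α β γ ι κ : Type*} [LinearOrder α] [LinearOrder β] [LinearOrder ι] [LinearOrder κ]

def IsBlockReversal [LT γ] (p : α → ι) (π : α → γ) : Prop :=
  ∀ x y, π x < π y ↔ p x < p y ∨ p x = p y ∧ y < x

theorem IsBlockReversal.lt_iff_of_lt [LT γ] {p : α → ι} {π : α → γ} (hπ : IsBlockReversal p π)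
    (hp : Monotone p) {x y : α} (h : x < y) :
    (π x < π y ↔ p x ≠ p y) ∧ (π y < π x ↔ p x = p y) := by
  have := hp h.le
  rw [hπ, hπ]
  constructor <;> grind

theorem isOccurrence_iff_of_isBlockReversal {m n : ℕ} {σ : Equiv.Perm (Fin m)}
    {π : Equiv.Perm (Fin n)} {p : Fin m → ι} {q : Fin n → κ} (hp : Monotone p) (hq : Monotone q)
    (hσ : IsBlockReversal p σ) (hπ : IsBlockReversal q π) (f : Fin m → Fin n) :
    IsOccurrence σ π f ↔ StrictMono f ∧ ∀ x y, q (f x) = q (f y) ↔ p x = p y := by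
  refine and_congr_right fun hf => ⟨fun h x y => ?_, fun h x y => ?_⟩
  · rcases lt_trichotomy x y with hxy | rfl | hxy
    · rw [← (hπ.lt_iff_of_lt hq (hf hxy)).2, h, (hσ.lt_iff_of_lt hp hxy).2]
    · simp
    · rw [eq_comm, ← (hπ.lt_iff_of_lt hq (hf hxy)).2, h, (hσ.lt_iff_of_lt hp hxy).2, eq_comm]
  · rcases lt_trichotomy x y with hxy | rfl | hxy
    · rw [(hπ.lt_iff_of_lt hq (hf hxy)).1, (hσ.lt_iff_of_lt hp hxy).1]
      exact not_congr (h x y)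
    · simp
    · rw [(hπ.lt_iff_of_lt hq (hf hxy)).2, (hσ.lt_iff_of_lt hp hxy).2, h]

variable {p : α → ι} {q : β → κ}

theorem strictMono_glue (hp : Monotone p) (hq : Monotone q) {g : ι → κ} (hg : StrictMono g)
    (h : ∀ i, {h : {x // p x = i} → {y // q y = g i} // StrictMono h}) :
    StrictMono fun x => ((h (p x)).1 ⟨x, rfl⟩ : β) := by
  intro x y hxy
  rcases (hp hxy.le).lt_or_eq with hlt | heq
  · apply hq.reflect_lt
    rw [((h (p x)).1 ⟨x, rfl⟩).2, ((h (p y)).1 ⟨y, rfl⟩).2]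
    exact hg hlt
  · -- `h (p x)` and `h (p y)` are indexed by different fibres; move `x` over to `p y`.
    have transport : ∀ i (hx : p x = i), ((h (p x)).1 ⟨x, rfl⟩ : β) = (h i).1 ⟨x, hx⟩ := by
      rintro _ rfl
      rfl
    dsimp only
    rw [transport (p y) heq]
    exact (h (p y)).2 (show (⟨x, heq⟩ : {x // p x = p y}) < ⟨y, rfl⟩ from hxy)

def strictMonoOverEquivPi (hp : Monotone p) (hq : Monotone q) {g : ι → κ} (hg : StrictMono g) :
    {f : α → β // StrictMono f ∧ q ∘ f = g ∘ p} ≃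
      ∀ i, {h : {x // p x = i} → {y // q y = g i} // StrictMono h} where
  toFun f i :=
    ⟨fun x => ⟨f.1 x, (congrFun f.2.2 x).trans (congrArg g x.2)⟩, fun _ _ hxy => f.2.1 hxy⟩
  invFun h :=
    ⟨fun x => (h (p x)).1 ⟨x, rfl⟩, strictMono_glue hp hq hg h,
      funext fun x => ((h (p x)).1 ⟨x, rfl⟩).2⟩
  left_inv _ := rfl
  right_inv h := by
    funext i
    apply Subtype.ext
    funext ⟨x, hx⟩
    subst hx
    rfl

noncomputable def blockPreservingEquivSigma (hp : Monotone p) (hsurj : Function.Surjective p)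
    (hq : Monotone q) :
    {f : α → β // StrictMono f ∧ ∀ x y, q (f x) = q (f y) ↔ p x = p y} ≃
      Σ g : {g : ι → κ // StrictMono g}, {f : α → β // StrictMono f ∧ q ∘ f = g.1 ∘ p} where
  toFun f := ⟨⟨q ∘ f.1 ∘ Function.surjInv hsurj, fun i j hij => by
      have hs := Function.surjInv_eq hsurj
      have hlt := f.2.1 (hp.reflect_lt
        (show p (Function.surjInv hsurj i) < p (Function.surjInv hsurj j) by rwa [hs, hs]))
      refine (hq hlt.le).lt_of_ne fun he => hij.ne ?_
      rw [← hs i, ← hs j]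
      exact (f.2.2 _ _).1 he⟩,
    f.1, f.2.1, funext fun x => (f.2.2 _ _).2 (Function.surjInv_eq hsurj (p x)).symm⟩
  invFun F := ⟨F.2.1, F.2.2.1, fun x y => by
    change (q ∘ F.2.1) x = (q ∘ F.2.1) y ↔ _
    rw [F.2.2.2]
    exact F.1.2.injective.eq_iff⟩
  left_inv _ := rfl
  right_inv F := Sigma.subtype_ext (Subtype.ext (funext fun i =>
    (congrFun F.2.2.2 _).trans (congrArg F.1.1 (Function.surjInv_eq hsurj i)))) rfl

end Blocks

def blockIndex : List ℕ → ℕ → ℕ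
  | [], _ => 0
  | ℓ :: L, x => if x < ℓ then 0 else blockIndex L (x - ℓ) + 1

theorem blockIndex_eq_iff : ∀ {L : List ℕ} {x i : ℕ}, x < L.sum →
    (blockIndex L x = i ↔ (L.take i).sum ≤ x ∧ x < (L.take (i + 1)).sum)
  | [], _, _, h => by simp at h
  | ℓ :: L, x, 0, h => by by_cases hx : x < ℓ <;> simp [blockIndex, hx]
  | ℓ :: L, x, i + 1, h => by
    rw [List.sum_cons] at h
    by_cases hx : x < ℓ
    · simp only [blockIndex, hx, if_true, List.take_succ_cons, List.sum_cons]
      omega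
    · simp only [blockIndex, hx, if_false, Nat.add_right_cancel_iff, List.take_succ_cons,
        List.sum_cons, blockIndex_eq_iff (L := L) (x := x - ℓ) (i := i) (by omega)]
      omega

theorem blockIndex_lt_length {L : List ℕ} {x : ℕ} (hx : x < L.sum) :
    blockIndex L x < L.length := by
  by_contra! h
  have := ((blockIndex_eq_iff hx).1 rfl).1
  rw [List.take_of_length_le h] at this
  omega

def block (L : List ℕ) (x : Fin L.sum) : Fin L.length :=
  ⟨blockIndex L x, blockIndex_lt_length x.2⟩

theorem block_eq_iff {L : List ℕ} {x : Fin L.sum} {i : Fin L.length} :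
    block L x = i ↔ (L.take i).sum ≤ x ∧ x < (L.take (i + 1)).sum :=
  Fin.ext_iff.trans (blockIndex_eq_iff x.2)

theorem block_monotone (L : List ℕ) : Monotone (block L) := by
  intro x y hxy
  by_contra! h
  have hx := (block_eq_iff (i := block L x)).1 rfl
  have hy := (block_eq_iff (i := block L y)).1 rfl
  have : (L.take (block L y + 1)).sum ≤ (L.take (block L x)).sum :=
    L.monotone_sum_take (show (block L y : ℕ) + 1 ≤ block L x from h)
  simp only [Fin.le_def] at hxy
  omega

theorem sum_take_add_getElem_le_sum (L : List ℕ) (i : Fin L.length) :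
    (L.take i).sum + L[(i : ℕ)] ≤ L.sum := by
  simpa [← List.sum_take_succ] using L.monotone_sum_take (show (i : ℕ) + 1 ≤ L.length from i.2)

theorem block_surjective {L : List ℕ} (hL : ∀ x ∈ L, 1 ≤ x) : Function.Surjective (block L) := by
  intro i
  have hi := hL _ (L.getElem_mem i.2)
  refine ⟨⟨(L.take i).sum, by have := sum_take_add_getElem_le_sum L i; omega⟩, block_eq_iff.2 ?_⟩
  rw [List.sum_take_succ _ _ i.2]
  exact ⟨le_rfl, Nat.lt_add_of_pos_right hi⟩

def blockFiberEquiv (L : List ℕ) (i : Fin L.length) :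
    {x : Fin L.sum // block L x = i} ≃ Fin L[(i : ℕ)] where
  toFun x := ⟨x.1 - (L.take i).sum, by
    have := block_eq_iff.1 x.2
    rw [List.sum_take_succ _ _ i.2] at this
    omega⟩
  invFun r := ⟨⟨(L.take i).sum + r, by have := sum_take_add_getElem_le_sum L i; omega⟩,
    block_eq_iff.2 (by
      rw [List.sum_take_succ _ _ i.2]
      exact ⟨Nat.le_add_right _ _, Nat.add_lt_add_left r.2 _⟩)⟩
  left_inv x := Subtype.ext (Fin.ext (by have := block_eq_iff.1 x.2; dsimp only; omega))
  right_inv r := Fin.ext (by simp)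

theorem card_block_fiber (L : List ℕ) (i : Fin L.length) :
    Nat.card {x // block L x = i} = L[(i : ℕ)] := by
  rw [Nat.card_congr (blockFiberEquiv L i), Nat.card_eq_fintype_card, Fintype.card_fin]

theorem permComp_apply_val {m n : ℕ} (σ : Equiv.Perm (Fin m)) (τ : Equiv.Perm (Fin n))
    (x : ℕ) (hx : x < m + n) :
    (permComp σ τ ⟨x, hx⟩ : ℕ) =
      if h : x < m then (σ ⟨x, h⟩ : ℕ) else m + (τ ⟨x - m, by omega⟩ : ℕ) := by
  split_ifs with h
  · rw [show (⟨x, hx⟩ : Fin (m + n)) = Fin.castAdd n ⟨x, h⟩ from rfl]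
    simp only [permComp, Equiv.permCongr_apply, finSumFinEquiv_symm_apply_castAdd,
      Equiv.sumCongr_apply, Sum.map_inl, finSumFinEquiv_apply_left, Fin.val_castAdd]
  · rw [show (⟨x, hx⟩ : Fin (m + n)) = Fin.natAdd m ⟨x - m, by omega⟩ from
      Fin.ext (by simp only [Fin.val_natAdd]; omega)]
    simp only [permComp, Equiv.permCongr_apply, finSumFinEquiv_symm_apply_natAdd,
      Equiv.sumCongr_apply, Sum.map_inr, finSumFinEquiv_apply_right, Fin.val_natAdd]

theorem decPerm_cons_apply_val (ℓ : ℕ) (L : List ℕ) (x : ℕ) (hx : x < (ℓ :: L).sum) :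
    (decPerm (ℓ :: L) ⟨x, hx⟩ : ℕ) =
      if h : x < ℓ then ℓ - 1 - x
      else ℓ + (decPerm L ⟨x - ℓ, by rw [List.sum_cons] at hx; omega⟩ : ℕ) := by
  rw [List.sum_cons] at hx
  have : (decPerm (ℓ :: L) ⟨x, _⟩ : ℕ) = (permComp Fin.revPerm (decPerm L) ⟨x, hx⟩ : ℕ) := rfl
  rw [this, permComp_apply_val]
  split_ifs
  · simp only [Fin.revPerm_apply, Fin.val_rev]
    omega
  · rfl

theorem decPerm_lt_decPerm_iff : ∀ {L : List ℕ} {x y : ℕ} (hx : x < L.sum) (hy : y < L.sum),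
    (decPerm L ⟨x, hx⟩ : ℕ) < decPerm L ⟨y, hy⟩ ↔
      blockIndex L x < blockIndex L y ∨ blockIndex L x = blockIndex L y ∧ y < x
  | [], _, _, hx, _ => by simp at hx
  | ℓ :: L, x, y, hx, hy => by
    rw [decPerm_cons_apply_val, decPerm_cons_apply_val]
    by_cases h1 : x < ℓ <;> by_cases h2 : y < ℓ <;> simp only [blockIndex, h1, h2, dite_true,
      dite_false, if_true, if_false, true_and]
    · omega
    · omega
    · omega
    · have := decPerm_lt_decPerm_iff (L := L) (x := x - ℓ) (y := y - ℓ)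
        (by rw [List.sum_cons] at hx; omega) (by rw [List.sum_cons] at hy; omega)
      omega

theorem isBlockReversal_decPerm (L : List ℕ) : IsBlockReversal (block L) (decPerm L) :=
  fun x y => (decPerm_lt_decPerm_iff x.2 y.2).trans (by simp only [Fin.ext_iff, Fin.lt_def]; rfl)

open scoped Classical in
theorem numOcc_decPerm_general (L ℓs : List ℕ) (hl : ∀ x ∈ ℓs, 1 ≤ x) :
    numOcc (decPerm ℓs) (decPerm L) =
      ∑ g ∈ Finset.univ.filter (fun g : Fin ℓs.length → Fin L.length => StrictMono g),
        ∏ j : Fin ℓs.length, Nat.choose (L.get (g j)) (ℓs.get j) := by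
  have hp := block_monotone ℓs
  have hq := block_monotone L
  calc numOcc (decPerm ℓs) (decPerm L)
      = Nat.card {f // StrictMono f ∧
          ∀ x y, block L (f x) = block L (f y) ↔ block ℓs x = block ℓs y} :=
        Nat.card_congr (Equiv.subtypeEquivRight fun f => isOccurrence_iff_of_isBlockReversal hp hq
          (isBlockReversal_decPerm ℓs) (isBlockReversal_decPerm L) f)
    _ = ∑ g : {g : Fin ℓs.length → Fin L.length // StrictMono g},
          Nat.card {f // StrictMono f ∧ block L ∘ f = g.1 ∘ block ℓs} := by
        rw [Nat.card_congr (blockPreservingEquivSigma hp (block_surjective hl) hq), Nat.card_sigma]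
    _ = ∑ g : {g : Fin ℓs.length → Fin L.length // StrictMono g},
          ∏ j, Nat.choose (L.get (g.1 j)) (ℓs.get j) := by
        refine Fintype.sum_congr _ _ fun g => ?_
        rw [Nat.card_congr (strictMonoOverEquivPi hp hq g.2), Nat.card_pi]
        refine Finset.prod_congr rfl fun j _ => ?_
        rw [card_strictMono_eq_choose, card_block_fiber, card_block_fiber, List.get_eq_getElem,
          List.get_eq_getElem]
    _ = _ := by
      rw [Finset.sum_subtype _ (fun _ => Finset.mem_filter_univ _)]

open scoped Classical in
theorem numOcc_decPerm (L ℓs : List ℕ) (hL : ∀ x ∈ L, 1 ≤ x) (hl : ∀ x ∈ ℓs, 1 ≤ x) :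
    numOcc (decPerm ℓs) (decPerm L) =
      ∑ g ∈ Finset.univ.filter (fun g : Fin ℓs.length → Fin L.length => StrictMono g),
        ∏ j : Fin ℓs.length, Nat.choose (L.get (g j)) (ℓs.get j) :=
  numOcc_decPerm_general L ℓs hl
end
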